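/- arXiv:2403.09300 — 2 statements merged into one kernel-verified Lean document; each statement's English description precedes it below -/
import Mathlib

section
/- Let G be a DAG and suppose the vertex X satisfies Condition 1 (Ne(X;G) ⊆ Ne(Z;G) ∪ {Z} for every child Z of X). Then X satisfies Condition 2 (Pa(V;G) ⊆ Pa(Z;G) for every child Z of X and every V ∈ Ch(X;G) ∩ Pa(Z;G)), and therefore X is removable in G, if and only if for every v-structure (X→V←Y) ∈ VS(X;G), every Z ∈ Ne(X;G)∖{V}, and every S ⊆ Mb(X;G)∖{V,Y,Z}, the set S ∪ {X,V} does not d-separate Y and Z in G. -/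
/-!
Common framework: mixed graphs, paths, colliders, m-separation, MAGs,
removability, Markov boundaries, latent projection, orders.
-/

/-- A mixed graph over a vertex set `verts`, with directed edges `dir` and
bidirected edges `bi`. -/
structure MixedGraph (V : Type*) where
  verts : Set V
  dir : V → V → Prop
  bi : V → V → Prop
  bi_symm : ∀ {a b : V}, bi a b → bi b a
  dir_mem : ∀ {a b : V}, dir a b → a ∈ verts ∧ b ∈ verts
  bi_mem : ∀ {a b : V}, bi a b → a ∈ verts ∧ b ∈ verts

namespace MixedGraph

variable {V : Type*}

/-- Two vertices are neighbors (adjacent) if joined by a directed or bidirected edge. -/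
def adj (G : MixedGraph V) (a b : V) : Prop := G.dir a b ∨ G.dir b a ∨ G.bi a b

/-- `a` is an ancestor of `b` (every vertex is an ancestor of itself). -/
def anc (G : MixedGraph V) (a b : V) : Prop := Relation.ReflTransGen G.dir a b

/-- The set of neighbors of `a`. -/
def neighbors (G : MixedGraph V) (a : V) : Set V := {b | b ≠ a ∧ G.adj a b}

/-- The set of parents of `a`. -/
def parents (G : MixedGraph V) (a : V) : Set V := {b | G.dir b a}

/-- The set of children of `a`. -/
def children (G : MixedGraph V) (a : V) : Set V := {b | G.dir a b}

/-- Co-parents of `a` (in a DAG): non-neighbors sharing a common child with `a`. -/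
def coparents (G : MixedGraph V) (a : V) : Set V :=
  {b | b ≠ a ∧ ¬ G.adj a b ∧ ∃ c, G.dir a c ∧ G.dir b c}

/-- The district of `a`: vertices joined to `a` by a path of bidirected edges
(including `a` itself). -/
def district (G : MixedGraph V) (a : V) : Set V := {b | Relation.ReflTransGen G.bi b a}

/-- `PaP(a) = Pa(a) ∪ Dis(a) ∪ Pa(Dis(a))`. -/
def paP (G : MixedGraph V) (a : V) : Set V :=
  G.parents a ∪ G.district a ∪ ⋃ b ∈ G.district a, G.parents b

/-- The induced subgraph of `G` over `W`. -/
def induce (G : MixedGraph V) (W : Set V) : MixedGraph V where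
  verts := G.verts ∩ W
  dir a b := G.dir a b ∧ a ∈ W ∧ b ∈ W
  bi a b := G.bi a b ∧ a ∈ W ∧ b ∈ W
  bi_symm h := ⟨G.bi_symm h.1, h.2.2, h.2.1⟩
  dir_mem h := ⟨⟨(G.dir_mem h.1).1, h.2.1⟩, (G.dir_mem h.1).2, h.2.2⟩
  bi_mem h := ⟨⟨(G.bi_mem h.1).1, h.2.1⟩, (G.bi_mem h.1).2, h.2.2⟩

end MixedGraph

/-- Possible orientations of an edge along a path: `fwd` is `a → b`,
`bwd` is `a ← b`, `bidir` is `a ↔ b`. -/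
inductive EdgeDir
  | fwd | bwd | bidir

/-- Validity of an orientation mark between consecutive path vertices. -/
def edirValid {V : Type*} (G : MixedGraph V) (a b : V) : EdgeDir → Prop
  | .fwd => G.dir a b
  | .bwd => G.dir b a
  | .bidir => G.bi a b

/-- The edge has an arrowhead at its second (right) endpoint. -/
def headAt2 (e : EdgeDir) : Prop := e = .fwd ∨ e = .bidir

/-- The edge has an arrowhead at its first (left) endpoint. -/
def headAt1 (e : EdgeDir) : Prop := e = .bwd ∨ e = .bidir

/-- A path in a mixed graph `G` from `x` to `y`: a sequence of distinct vertices
`vert 0, …, vert len` together with an oriented edge of `G` between consecutive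
vertices. -/
structure MPath {V : Type*} (G : MixedGraph V) (x y : V) where
  len : ℕ
  len_pos : 0 < len
  vert : ℕ → V
  edir : ℕ → EdgeDir
  first : vert 0 = x
  last : vert len = y
  mem : ∀ i, i ≤ len → vert i ∈ G.verts
  inj : ∀ i j, i ≤ len → j ≤ len → vert i = vert j → i = j
  valid : ∀ i, i < len → edirValid G (vert i) (vert (i + 1)) (edir i)

namespace MPath

variable {V : Type*} {G : MixedGraph V} {x y : V}

/-- The vertex at interior position `i` (where `0 < i < len`) is a collider on the path:
both incident path edges have an arrowhead at it. -/
def collider (p : MPath G x y) (i : ℕ) : Prop :=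
  headAt2 (p.edir (i - 1)) ∧ headAt1 (p.edir i)

/-- The path is blocked by `Z`: some interior vertex is a collider that is not an
ancestor of any vertex of `Z ∪ {x, y}`, or a non-collider belonging to `Z`. -/
def blocked (p : MPath G x y) (Z : Set V) : Prop :=
  ∃ i, 0 < i ∧ i < p.len ∧
    ((p.collider i ∧ ∀ w ∈ Z ∪ ({x, y} : Set V), ¬ G.anc (p.vert i) w) ∨
     (¬ p.collider i ∧ p.vert i ∈ Z))

/-- A collider path: every interior vertex is a collider on the path. -/
def isColliderPath (p : MPath G x y) : Prop :=
  ∀ i, 0 < i → i < p.len → p.collider i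

/-- An inducing path relative to `W2`: every interior non-collider belongs to `W2`,
and every interior collider is an ancestor of `x` or of `y`. -/
def isInducing (p : MPath G x y) (W2 : Set V) : Prop :=
  ∀ i, 0 < i → i < p.len →
    (p.collider i → G.anc (p.vert i) x ∨ G.anc (p.vert i) y) ∧
    (¬ p.collider i → p.vert i ∈ W2)

end MPath

/-- `Z` m-separates `x` and `y` in `G`: every path between `x` and `y` is blocked by `Z`. -/
def mSep {V : Type*} (G : MixedGraph V) (x y : V) (Z : Set V) : Prop :=
  ∀ p : MPath G x y, p.blocked Z

namespace MixedGraph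

variable {V : Type*}

/-- The Markov boundary of `a` in `G`: vertices `b ≠ a` with a collider path to `a`. -/
def mb (G : MixedGraph V) (a : V) : Set V :=
  {b | b ≠ a ∧ ∃ p : MPath G b a, p.isColliderPath}

/-- `G` is a maximal ancestral graph (MAG): no directed cycles, no almost directed
cycles, and every pair of distinct non-neighbor vertices is m-separated by some set. -/
structure IsMAG (G : MixedGraph V) : Prop where
  no_dir_cycle : ∀ a b, G.dir a b → ¬ G.anc b a
  no_almost_dir_cycle : ∀ a b, G.bi a b → ¬ G.anc b a
  maximal : ∀ a ∈ G.verts, ∀ b ∈ G.verts, a ≠ b → ¬ G.adj a b →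
    ∃ Z ⊆ G.verts \ {a, b}, mSep G a b Z

/-- `G` is a DAG: a MAG with no bidirected edges. -/
def IsDAG (G : MixedGraph V) : Prop := G.IsMAG ∧ ∀ a b, ¬ G.bi a b

/-- `x` is removable in `G`: `G` and the induced subgraph `G[verts ∖ {x}]` impose the
same m-separation relations among the vertices of `verts ∖ {x}`. -/
def Removable (G : MixedGraph V) (x : V) : Prop :=
  ∀ y z, y ∈ G.verts → z ∈ G.verts → y ≠ x → z ≠ x → y ≠ z →
    ∀ Z ⊆ G.verts \ {x, y, z},
      (mSep G y z Z ↔ mSep (G.induce (G.verts \ {x})) y z Z)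

/-- There is an inducing path between `a` and `b` in `G` relative to `W2`. -/
def InducingAdj (G : MixedGraph V) (W2 : Set V) (a b : V) : Prop :=
  (∃ p : MPath G a b, p.isInducing W2) ∨ (∃ p : MPath G b a, p.isInducing W2)

/-- The latent projection of `G` onto `W1`: distinct `a, b ∈ W1` are joined iff there is
an inducing path between them in `G` relative to `G.verts ∖ W1`; the edge is `a → b` if
`a` is an ancestor of `b` in `G` but not conversely, and `a ↔ b` if neither is an
ancestor of the other. -/
def project (G : MixedGraph V) (W1 : Set V) : MixedGraph V where
  verts := W1
  dir a b := a ∈ W1 ∧ b ∈ W1 ∧ a ≠ b ∧ InducingAdj G (G.verts \ W1) a b ∧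
    G.anc a b ∧ ¬ G.anc b a
  bi a b := a ∈ W1 ∧ b ∈ W1 ∧ a ≠ b ∧ InducingAdj G (G.verts \ W1) a b ∧
    ¬ G.anc a b ∧ ¬ G.anc b a
  bi_symm h :=
    ⟨h.2.1, h.1, h.2.2.1.symm, Or.symm h.2.2.2.1, h.2.2.2.2.2, h.2.2.2.2.1⟩
  dir_mem h := ⟨h.1, h.2.1⟩
  bi_mem h := ⟨h.1, h.2.1⟩

/-- Two mixed graphs over the same vertex set impose exactly the same m-separation
relations. -/
def MarkovEquiv (G1 G2 : MixedGraph V) : Prop :=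
  ∀ a ∈ G1.verts, ∀ b ∈ G1.verts, a ≠ b → ∀ Z ⊆ G1.verts \ {a, b},
    (mSep G1 a b Z ↔ mSep G2 a b Z)

/-- A list of vertices is an order over (the vertex set of) `G` if it lists each vertex
exactly once. -/
def IsOrder (G : MixedGraph V) (l : List V) : Prop :=
  l.Nodup ∧ ∀ v, v ∈ l ↔ v ∈ G.verts

/-- An r-order of `G`: an order `(X₁, …, Xₙ)` such that each `Xᵢ` is removable in the
induced subgraph `G[{Xᵢ, …, Xₙ}]`. -/
def IsROrder (G : MixedGraph V) (l : List V) : Prop :=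
  IsOrder G l ∧ ∀ (i : ℕ) (h : i < l.length),
    Removable (G.induce {v | v ∈ l.drop i}) (l.get ⟨i, h⟩)

/-- A c-order of a DAG `G`: an order `(X₁, …, Xₙ)` such that each `Xᵢ` has no children
in the induced subgraph `G[{Xᵢ, …, Xₙ}]`. -/
def IsCOrder (G : MixedGraph V) (l : List V) : Prop :=
  IsOrder G l ∧ ∀ (i : ℕ) (h : i < l.length),
    ∀ v, ¬ (G.induce {v' | v' ∈ l.drop i}).dir (l.get ⟨i, h⟩) v

/-- The maximum in-degree of `G`. -/
noncomputable def deltaIn (G : MixedGraph V) : ℕ :=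
  sSup {n | ∃ a ∈ G.verts, n = (G.parents a).ncard}

/-- `Δin⁺(G)`: the maximum of `|PaP(a)|` over the vertices of `G`. -/
noncomputable def deltaInPlus (G : MixedGraph V) : ℕ :=
  sSup {n | ∃ a ∈ G.verts, n = (G.paP a).ncard}

/-- `G` is diamond-free: it contains no induced subgraph on four vertices `a, b, c, d`
whose skeleton has exactly the edges a–b, a–c, a–d, b–d, c–d (with b, c non-adjacent). -/
def DiamondFree (G : MixedGraph V) : Prop :=
  ¬ ∃ a b c d : V, a ∈ G.verts ∧ b ∈ G.verts ∧ c ∈ G.verts ∧ d ∈ G.verts ∧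
    a ≠ b ∧ a ≠ c ∧ a ≠ d ∧ b ≠ c ∧ b ≠ d ∧ c ≠ d ∧
    G.adj a b ∧ G.adj a c ∧ G.adj a d ∧ G.adj b d ∧ G.adj c d ∧ ¬ G.adj b c

end MixedGraph

/-- The cost of an order `(X₁, …, Xₙ)`: `Σₜ |Ne(Xₜ; G_{Vₜ})|` where `Vₜ = {Xₜ, …, Xₙ}`
and `G_{Vₜ}` is the latent projection of `G` onto `Vₜ` (the term for `t = n` is zero). -/
noncomputable def orderCost {V : Type*} (G : MixedGraph V) : List V → ℕ
  | [] => 0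
  | x :: rest => ((G.project {v | v ∈ x :: rest}).neighbors x).ncard + orderCost G rest


/-! ### Auxiliary machinery for Statement 11 -/

section Stmt11Aux

variable {V : Type*}

namespace MixedGraph

lemma anc_of_dir {G : MixedGraph V} {a b : V} (h : G.dir a b) : G.anc a b :=
  Relation.ReflTransGen.single h

lemma dir_ne' {G : MixedGraph V} (hacyc : ∀ a b, G.dir a b → ¬ G.anc b a)
    {a b : V} (h : G.dir a b) : a ≠ b := by
  rintro rfl
  exact hacyc a a h Relation.ReflTransGen.refl

lemma anc_antisymm' {G : MixedGraph V} (hacyc : ∀ a b, G.dir a b → ¬ G.anc b a)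
    {a b : V} (h1 : G.anc a b) (h2 : G.anc b a) : a = b := by
  rcases (Relation.ReflTransGen.cases_head h1) with rfl | ⟨c, hac, hcb⟩
  · rfl
  · exact absurd (hcb.trans h2) (hacyc a c hac)

/-- Condition 1 shortcut: a parent of `x` is a parent of every child of `x`. -/
lemma shortcut {G : MixedGraph V} (hbi : ∀ a b, ¬ G.bi a b)
    (hacyc : ∀ a b, G.dir a b → ¬ G.anc b a) {x : V}
    (hcond1 : ∀ z ∈ G.children x, G.neighbors x ⊆ G.neighbors z ∪ {z})
    {a b : V} (ha : G.dir a x) (hb : G.dir x b) : G.dir a b := by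
  have hax : a ≠ x := dir_ne' hacyc ha
  have hmem : a ∈ G.neighbors x := ⟨hax, Or.inr (Or.inl ha)⟩
  rcases hcond1 b hb hmem with hne | hab
  · rcases hne.2 with h | h | h
    · exact absurd ((anc_of_dir ha).trans (anc_of_dir hb)) (hacyc b a h)
    · exact h
    · exact absurd h (hbi b a)
  · exfalso
    rw [Set.mem_singleton_iff] at hab
    subst hab
    exact hacyc x a hb (anc_of_dir ha)

/-- Condition 1: two distinct children of `x` are adjacent. -/
lemma children_adj {G : MixedGraph V} (hbi : ∀ a b, ¬ G.bi a b)
    (hacyc : ∀ a b, G.dir a b → ¬ G.anc b a) {x : V}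
    (hcond1 : ∀ z ∈ G.children x, G.neighbors x ⊆ G.neighbors z ∪ {z})
    {a b : V} (ha : G.dir x a) (hb : G.dir x b) (hne : a ≠ b) :
    G.dir a b ∨ G.dir b a := by
  have hax : a ≠ x := (dir_ne' hacyc ha).symm
  have hmem : a ∈ G.neighbors x := ⟨hax, Or.inl ha⟩
  rcases hcond1 b hb hmem with hn | hs
  · rcases hn.2 with h | h | h
    · exact Or.inr h
    · exact Or.inl h
    · exact absurd h (hbi b a)
  · exact absurd (Set.mem_singleton_iff.mp hs) hne

end MixedGraph

/-- Walks in a mixed graph: like `MPath` but without injectivity. -/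
structure MWalk {V : Type*} (G : MixedGraph V) (x y : V) where
  len : ℕ
  len_pos : 0 < len
  vert : ℕ → V
  edir : ℕ → EdgeDir
  first : vert 0 = x
  last : vert len = y
  mem : ∀ i, i ≤ len → vert i ∈ G.verts
  valid : ∀ i, i < len → edirValid G (vert i) (vert (i + 1)) (edir i)

namespace MWalk

variable {G : MixedGraph V} {y z : V}

def collider (p : MWalk G y z) (i : ℕ) : Prop :=
  headAt2 (p.edir (i - 1)) ∧ headAt1 (p.edir i)

/-- A walk is active (d-connecting) given `Z`. -/
def active (p : MWalk G y z) (Z : Set V) : Prop :=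
  ∀ i, 0 < i → i < p.len →
    (p.collider i → ∃ w ∈ Z ∪ ({y, z} : Set V), G.anc (p.vert i) w) ∧
    (¬ p.collider i → p.vert i ∉ Z)

end MWalk

def MPath.toWalk {G : MixedGraph V} {y z : V} (p : MPath G y z) : MWalk G y z :=
  ⟨p.len, p.len_pos, p.vert, p.edir, p.first, p.last, p.mem, p.valid⟩

lemma MPath.not_blocked_iff {G : MixedGraph V} {y z : V} (p : MPath G y z) (Z : Set V) :
    ¬ p.blocked Z ↔ p.toWalk.active Z := by
  constructor
  · intro h i h1 h2
    constructor
    · intro hc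
      by_contra hno
      push_neg at hno
      exact h ⟨i, h1, h2, Or.inl ⟨hc, hno⟩⟩
    · intro hc hz
      exact h ⟨i, h1, h2, Or.inr ⟨hc, hz⟩⟩
  · rintro h ⟨i, h1, h2, (⟨hc, hno⟩ | ⟨hc, hz⟩)⟩
    · obtain ⟨w, hw, hanc⟩ := (h i h1 h2).1 hc
      exact hno w hw hanc
    · exact (h i h1 h2).2 hc hz

def MWalk.toPath {G : MixedGraph V} {y z : V} (p : MWalk G y z)
    (hinj : ∀ i j, i ≤ p.len → j ≤ p.len → p.vert i = p.vert j → i = j) : MPath G y z :=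
  ⟨p.len, p.len_pos, p.vert, p.edir, p.first, p.last, p.mem, hinj, p.valid⟩

lemma MWalk.toPath_not_blocked {G : MixedGraph V} {y z : V} (p : MWalk G y z)
    (hinj : ∀ i j, i ≤ p.len → j ≤ p.len → p.vert i = p.vert j → i = j)
    {Z : Set V} (hact : p.active Z) : ¬ (p.toPath hinj).blocked Z := by
  rw [MPath.not_blocked_iff]
  exact hact

lemma edir_fwd_or_bwd {G : MixedGraph V} (hbi : ∀ a b, ¬ G.bi a b) {a b : V} {e : EdgeDir}
    (h : edirValid G a b e) : e = EdgeDir.fwd ∨ e = EdgeDir.bwd := by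
  cases e with
  | fwd => exact Or.inl rfl
  | bwd => exact Or.inr rfl
  | bidir => exact absurd h (hbi a b)

lemma not_headAt1_fwd : ¬ headAt1 EdgeDir.fwd := by
  rintro (h | h) <;> simp_all

lemma not_headAt2_bwd : ¬ headAt2 EdgeDir.bwd := by
  rintro (h | h) <;> simp_all

lemma headAt2_fwd : headAt2 EdgeDir.fwd := Or.inl rfl

lemma headAt1_bwd : headAt1 EdgeDir.bwd := Or.inl rfl

namespace MWalk

variable {G : MixedGraph V} {y z : V}

/-- In a graph without bidirected edges, any interior vertex of an active walk whose
left edge has an arrowhead at it is an ancestor of `Z ∪ {y, z}`. -/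
lemma descend (hbi : ∀ a b, ¬ G.bi a b) (p : MWalk G y z) {Z : Set V}
    (hact : p.active Z) {i : ℕ} (h0 : 0 < i) (hl : i < p.len)
    (hh : headAt2 (p.edir (i - 1))) :
    ∃ w ∈ Z ∪ ({y, z} : Set V), G.anc (p.vert i) w := by
  by_contra hcon
  push_neg at hcon
  have key : ∀ d, i + d ≤ p.len →
      G.anc (p.vert i) (p.vert (i + d)) ∧ (i + d < p.len → p.edir (i + d) = EdgeDir.fwd) := by
    intro d
    induction d with
    | zero =>
      intro _
      refine ⟨Relation.ReflTransGen.refl, fun hlt => ?_⟩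
      have hnc : ¬ p.collider i := by
        intro hc
        obtain ⟨w, hw, hanc⟩ := (hact i h0 hl).1 hc
        exact hcon w hw hanc
      have hnh : ¬ headAt1 (p.edir i) := fun hh1 => hnc ⟨hh, hh1⟩
      rcases edir_fwd_or_bwd hbi (p.valid i hl) with h | h
      · simpa using h
      · exact absurd (h ▸ headAt1_bwd) hnh
    | succ d ih =>
      intro hle
      have hle' : i + d ≤ p.len := by omega
      have hlt' : i + d < p.len := by omega
      obtain ⟨hanc, hfwd⟩ := ih hle'
      have hdir : G.dir (p.vert (i + d)) (p.vert (i + d + 1)) := by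
        have := p.valid (i + d) hlt'
        rw [hfwd hlt'] at this
        exact this
      have hanc' : G.anc (p.vert i) (p.vert (i + (d + 1))) := by
        rw [show i + (d + 1) = i + d + 1 by omega]
        exact hanc.tail hdir
      refine ⟨hanc', fun hlt2 => ?_⟩
      have hm0 : 0 < i + (d + 1) := by omega
      have hh2 : headAt2 (p.edir (i + (d + 1) - 1)) := by
        rw [show i + (d + 1) - 1 = i + d by omega, hfwd hlt']
        exact headAt2_fwd
      have hnc : ¬ p.collider (i + (d + 1)) := by
        intro hc
        obtain ⟨w, hw, hanc2⟩ := (hact _ hm0 hlt2).1 hc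
        exact hcon w hw (hanc'.trans hanc2)
      have hnh : ¬ headAt1 (p.edir (i + (d + 1))) := fun hh1 => hnc ⟨hh2, hh1⟩
      rcases edir_fwd_or_bwd hbi (p.valid _ hlt2) with h | h
      · exact h
      · exact absurd (h ▸ headAt1_bwd) hnh
  have := (key (p.len - i) (by omega)).1
  rw [show i + (p.len - i) = p.len by omega, p.last] at this
  exact hcon z (by simp) this

/-- Splicing out the segment between two occurrences of the same vertex. -/
def splice (p : MWalk G y z) (i j : ℕ) (hij : i < j) (hj : j ≤ p.len)
    (heq : p.vert i = p.vert j) (hpos : 0 < p.len - (j - i)) : MWalk G y z where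
  len := p.len - (j - i)
  len_pos := hpos
  vert t := if t ≤ i then p.vert t else p.vert (t + (j - i))
  edir t := if t < i then p.edir t else p.edir (t + (j - i))
  first := by simp [p.first]
  last := by
    rcases Nat.lt_or_ge i (p.len - (j - i)) with h | h
    · rw [if_neg (by omega : ¬ p.len - (j - i) ≤ i)]
      rw [show p.len - (j - i) + (j - i) = p.len by omega, p.last]
    · have h1 : p.len - (j - i) = i := by omega
      rw [if_pos (by omega : p.len - (j - i) ≤ i), h1, heq,
        show j = p.len by omega, p.last]
  mem t ht := by
    split <;> exact p.mem _ (by omega)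
  valid t ht := by
    rcases Nat.lt_trichotomy t i with h | h | h
    · rw [if_pos h, if_pos (by omega : t ≤ i), if_pos (by omega : t + 1 ≤ i)]
      exact p.valid t (by omega)
    · subst h
      rw [if_neg (by omega : ¬ t < t), if_pos (le_refl t), if_neg (by omega : ¬ t + 1 ≤ t)]
      rw [show t + (j - t) = j by omega, show t + 1 + (j - t) = j + 1 by omega, heq]
      exact p.valid j (by omega)
    · rw [if_neg (by omega : ¬ t < i), if_neg (by omega : ¬ t ≤ i),
        if_neg (by omega : ¬ t + 1 ≤ i)]
      rw [show t + 1 + (j - i) = t + (j - i) + 1 by omega]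
      exact p.valid (t + (j - i)) (by omega)

lemma splice_active (hbi : ∀ a b, ¬ G.bi a b) {p : MWalk G y z} {Z : Set V}
    (hact : p.active Z) (i j : ℕ) (hij : i < j) (hj : j ≤ p.len)
    (heq : p.vert i = p.vert j) (hpos : 0 < p.len - (j - i)) :
    (p.splice i j hij hj heq hpos).active Z := by
  intro t ht0 htl
  have htl' : t < p.len - (j - i) := htl
  rcases Nat.lt_trichotomy t i with h | h | h
  · have e1 : (p.splice i j hij hj heq hpos).edir (t - 1) = p.edir (t - 1) :=
      if_pos (by omega)
    have e2 : (p.splice i j hij hj heq hpos).edir t = p.edir t := if_pos h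
    have e3 : (p.splice i j hij hj heq hpos).vert t = p.vert t := if_pos (by omega)
    simp only [MWalk.collider, e1, e2, e3]
    exact hact t ht0 (by omega)
  · subst h
    have e1 : (p.splice t j hij hj heq hpos).edir (t - 1) = p.edir (t - 1) :=
      if_pos (by omega)
    have e2 : (p.splice t j hij hj heq hpos).edir t = p.edir j := by
      show (if t < t then p.edir t else p.edir (t + (j - t))) = _
      rw [if_neg (by omega : ¬ t < t), show t + (j - t) = j by omega]
    have e3 : (p.splice t j hij hj heq hpos).vert t = p.vert t := if_pos (le_refl t)
    have hjlen : j < p.len := by omega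
    simp only [MWalk.collider, e1, e2, e3]
    constructor
    · intro hc
      exact p.descend hbi hact ht0 (by omega) hc.1
    · intro hnc
      by_cases hh2 : headAt2 (p.edir (t - 1))
      · have hnh1 : ¬ headAt1 (p.edir j) := fun hh1 => hnc ⟨hh2, hh1⟩
        have : ¬ p.collider j := fun hc => hnh1 hc.2
        have := (hact j (by omega) hjlen).2 this
        rwa [← heq] at this
      · have : ¬ p.collider t := fun hc => hh2 hc.1
        exact (hact t ht0 (by omega)).2 this
  · have e1 : (p.splice i j hij hj heq hpos).edir (t - 1) = p.edir (t - 1 + (j - i)) :=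
      if_neg (by omega)
    have e2 : (p.splice i j hij hj heq hpos).edir t = p.edir (t + (j - i)) :=
      if_neg (by omega)
    have e3 : (p.splice i j hij hj heq hpos).vert t = p.vert (t + (j - i)) :=
      if_neg (by omega)
    have e4 : t - 1 + (j - i) = t + (j - i) - 1 := by omega
    simp only [MWalk.collider, e1, e2, e3, e4]
    exact hact (t + (j - i)) (by omega) (by omega)

/-- From an active walk extract an unblocked path. -/
lemma to_unblocked_path (hbi : ∀ a b, ¬ G.bi a b) (hyz : y ≠ z) {Z : Set V} :
    ∀ n (p : MWalk G y z), p.len ≤ n → p.active Z →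
      ∃ q : MPath G y z, ¬ q.blocked Z := by
  intro n
  induction n with
  | zero => intro p h _; exact absurd p.len_pos (by omega)
  | succ n ih =>
    intro p hlen hact
    by_cases hinj : ∀ i j, i ≤ p.len → j ≤ p.len → p.vert i = p.vert j → i = j
    · exact ⟨p.toPath hinj, p.toPath_not_blocked hinj hact⟩
    · push_neg at hinj
      obtain ⟨s, t, hs, ht, heq, hne⟩ := hinj
      obtain ⟨i, j, hij, hj, heq'⟩ : ∃ i j, i < j ∧ j ≤ p.len ∧ p.vert i = p.vert j := by
        rcases Nat.lt_or_ge s t with h | h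
        · exact ⟨s, t, h, ht, heq⟩
        · exact ⟨t, s, by omega, hs, heq.symm⟩
      have hpos : 0 < p.len - (j - i) := by
        rcases Nat.eq_zero_or_pos (p.len - (j - i)) with h | h
        · exfalso
          have hi0 : i = 0 := by omega
          have hjl : j = p.len := by omega
          apply hyz
          calc y = p.vert 0 := p.first.symm
            _ = p.vert i := by rw [hi0]
            _ = p.vert j := heq'
            _ = p.vert p.len := by rw [hjl]
            _ = z := p.last
        · exact h
      exact ih (p.splice i j hij hj heq' hpos) (by simp only [MWalk.splice]; omega)
        (splice_active hbi hact i j hij hj heq' hpos)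

end MWalk

namespace MWalk

variable {G : MixedGraph V} {y z : V}

/-- Delete positions `k, …, k+d-1` from a walk, bridging with edge `e`. -/
def delete (p : MWalk G y z) (k d : ℕ) (hk : 1 ≤ k) (hd : 1 ≤ d) (hkd : k + d ≤ p.len)
    (e : EdgeDir) (he : edirValid G (p.vert (k - 1)) (p.vert (k + d)) e) : MWalk G y z where
  len := p.len - d
  len_pos := by omega
  vert i := if i < k then p.vert i else p.vert (i + d)
  edir i := if i < k - 1 then p.edir i else if i = k - 1 then e else p.edir (i + d)
  first := by rw [if_pos (by omega : 0 < k), p.first]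
  last := by
    rw [if_neg (by omega : ¬ p.len - d < k), show p.len - d + d = p.len by omega, p.last]
  mem i hi := by split <;> exact p.mem _ (by omega)
  valid i hi := by
    rcases Nat.lt_trichotomy i (k - 1) with h | h | h
    · rw [if_pos h, if_pos (by omega : i < k), if_pos (by omega : i + 1 < k)]
      exact p.valid i (by omega)
    · rw [if_neg (by omega : ¬ i < k - 1), if_pos h, if_pos (by omega : i < k),
        if_neg (by omega : ¬ i + 1 < k), h, show k - 1 + 1 + d = k + d by omega]
      exact he
    · rw [if_neg (by omega : ¬ i < k - 1), if_neg (by omega : ¬ i = k - 1),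
        if_neg (by omega : ¬ i < k), if_neg (by omega : ¬ i + 1 < k),
        show i + 1 + d = i + d + 1 by omega]
      exact p.valid (i + d) (by omega)

lemma delete_active {p : MWalk G y z} {Z : Set V} (hact : p.active Z)
    {k d : ℕ} (hk : 1 ≤ k) (hd : 1 ≤ d) (hkd : k + d ≤ p.len)
    {e : EdgeDir} (he : edirValid G (p.vert (k - 1)) (p.vert (k + d)) e)
    (HL : 1 < k →
      (headAt2 (p.edir (k - 1 - 1)) ∧ headAt1 e →
        ∃ w ∈ Z ∪ ({y, z} : Set V), G.anc (p.vert (k - 1)) w) ∧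
      (¬ (headAt2 (p.edir (k - 1 - 1)) ∧ headAt1 e) → p.vert (k - 1) ∉ Z))
    (HR : k + d < p.len →
      (headAt2 e ∧ headAt1 (p.edir (k + d)) →
        ∃ w ∈ Z ∪ ({y, z} : Set V), G.anc (p.vert (k + d)) w) ∧
      (¬ (headAt2 e ∧ headAt1 (p.edir (k + d))) → p.vert (k + d) ∉ Z)) :
    (p.delete k d hk hd hkd e he).active Z := by
  intro t ht0 htl
  have htl' : t < p.len - d := htl
  set q := p.delete k d hk hd hkd e he with hq
  rcases Nat.lt_trichotomy t (k - 1) with h | h | h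
  · have e1 : q.edir (t - 1) = p.edir (t - 1) := if_pos (by omega)
    have e2 : q.edir t = p.edir t := if_pos h
    have e3 : q.vert t = p.vert t := if_pos (by omega)
    simp only [MWalk.collider, e1, e2, e3]
    exact hact t ht0 (by omega)
  · have e1 : q.edir (t - 1) = p.edir (t - 1) := if_pos (by omega)
    have e2 : q.edir t = e := by
      show (if t < k - 1 then p.edir t else if t = k - 1 then e else p.edir (t + d)) = e
      rw [if_neg (by omega : ¬ t < k - 1), if_pos h]
    have e3 : q.vert t = p.vert t := if_pos (by omega)
    simp only [MWalk.collider, e1, e2, e3]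
    rw [h]
    exact HL (by omega)
  · by_cases h2 : t = k
    · have e1 : q.edir (t - 1) = e := by
        show (if t - 1 < k - 1 then p.edir (t - 1) else
          if t - 1 = k - 1 then e else p.edir (t - 1 + d)) = e
        rw [if_neg (by omega : ¬ t - 1 < k - 1), if_pos (by omega : t - 1 = k - 1)]
      have e2 : q.edir t = p.edir (t + d) := by
        show (if t < k - 1 then p.edir t else if t = k - 1 then e else p.edir (t + d)) = _
        rw [if_neg (by omega : ¬ t < k - 1), if_neg (by omega : ¬ t = k - 1)]
      have e3 : q.vert t = p.vert (t + d) := if_neg (by omega)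
      simp only [MWalk.collider, e1, e2, e3]
      rw [h2]
      exact HR (by omega)
    · have e1 : q.edir (t - 1) = p.edir (t - 1 + d) := by
        show (if t - 1 < k - 1 then p.edir (t - 1) else
          if t - 1 = k - 1 then e else p.edir (t - 1 + d)) = _
        rw [if_neg (by omega : ¬ t - 1 < k - 1), if_neg (by omega : ¬ t - 1 = k - 1)]
      have e2 : q.edir t = p.edir (t + d) := by
        show (if t < k - 1 then p.edir t else if t = k - 1 then e else p.edir (t + d)) = _
        rw [if_neg (by omega : ¬ t < k - 1), if_neg (by omega : ¬ t = k - 1)]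
      have e3 : q.vert t = p.vert (t + d) := if_neg (by omega)
      have e4 : t - 1 + d = t + d - 1 := by omega
      simp only [MWalk.collider, e1, e2, e3, e4]
      exact hact (t + d) (by omega) (by omega)

/-- Substitute the vertex at position `k` by `c`, rewiring with edges `e₁, e₂`. -/
def subst (p : MWalk G y z) (k : ℕ) (c : V) (hk0 : 0 < k) (hkl : k < p.len)
    (hc : c ∈ G.verts) (e₁ e₂ : EdgeDir)
    (h1 : edirValid G (p.vert (k - 1)) c e₁) (h2 : edirValid G c (p.vert (k + 1)) e₂) :
    MWalk G y z where
  len := p.len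
  len_pos := p.len_pos
  vert i := if i = k then c else p.vert i
  edir i := if i = k - 1 then e₁ else if i = k then e₂ else p.edir i
  first := by rw [if_neg (by omega : ¬ (0 : ℕ) = k), p.first]
  last := by rw [if_neg (by omega : ¬ p.len = k), p.last]
  mem i hi := by
    split
    · exact hc
    · exact p.mem i hi
  valid i hi := by
    rcases Nat.lt_trichotomy i (k - 1) with h | h | h
    · rw [if_neg (by omega : ¬ i = k - 1), if_neg (by omega : ¬ i = k),
        if_neg (by omega : ¬ i = k), if_neg (by omega : ¬ i + 1 = k)]
      exact p.valid i hi
    · rw [if_pos h, if_neg (by omega : ¬ i = k), if_pos (by omega : i + 1 = k), h]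
      exact h1
    · by_cases h2' : i = k
      · rw [if_neg (by omega : ¬ i = k - 1), if_pos h2', if_pos h2',
          if_neg (by omega : ¬ i + 1 = k), h2']
        exact h2
      · rw [if_neg (by omega : ¬ i = k - 1), if_neg h2', if_neg h2',
          if_neg (by omega : ¬ i + 1 = k)]
        exact p.valid i hi

lemma subst_active {p : MWalk G y z} {Z : Set V} (hact : p.active Z)
    {k : ℕ} {c : V} (hk0 : 0 < k) (hkl : k < p.len) (hc : c ∈ G.verts)
    {e₁ e₂ : EdgeDir}
    (h1 : edirValid G (p.vert (k - 1)) c e₁) (h2 : edirValid G c (p.vert (k + 1)) e₂)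
    (H1 : 1 < k →
      (headAt2 (p.edir (k - 1 - 1)) ∧ headAt1 e₁ →
        ∃ w ∈ Z ∪ ({y, z} : Set V), G.anc (p.vert (k - 1)) w) ∧
      (¬ (headAt2 (p.edir (k - 1 - 1)) ∧ headAt1 e₁) → p.vert (k - 1) ∉ Z))
    (H0 : (headAt2 e₁ ∧ headAt1 e₂ → ∃ w ∈ Z ∪ ({y, z} : Set V), G.anc c w) ∧
      (¬ (headAt2 e₁ ∧ headAt1 e₂) → c ∉ Z))
    (H2 : k + 1 < p.len →
      (headAt2 e₂ ∧ headAt1 (p.edir (k + 1)) →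
        ∃ w ∈ Z ∪ ({y, z} : Set V), G.anc (p.vert (k + 1)) w) ∧
      (¬ (headAt2 e₂ ∧ headAt1 (p.edir (k + 1))) → p.vert (k + 1) ∉ Z)) :
    (p.subst k c hk0 hkl hc e₁ e₂ h1 h2).active Z := by
  intro t ht0 htl
  have htl' : t < p.len := htl
  set q := p.subst k c hk0 hkl hc e₁ e₂ h1 h2 with hq
  rcases Nat.lt_trichotomy t (k - 1) with h | h | h
  · have e1 : q.edir (t - 1) = p.edir (t - 1) := by
      show (if t - 1 = k - 1 then e₁ else if t - 1 = k then e₂ else p.edir (t - 1)) = _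
      rw [if_neg (by omega : ¬ t - 1 = k - 1), if_neg (by omega : ¬ t - 1 = k)]
    have e2 : q.edir t = p.edir t := by
      show (if t = k - 1 then e₁ else if t = k then e₂ else p.edir t) = _
      rw [if_neg (by omega : ¬ t = k - 1), if_neg (by omega : ¬ t = k)]
    have e3 : q.vert t = p.vert t := if_neg (by omega)
    simp only [MWalk.collider, e1, e2, e3]
    exact hact t ht0 htl'
  · have e1 : q.edir (t - 1) = p.edir (t - 1) := by
      show (if t - 1 = k - 1 then e₁ else if t - 1 = k then e₂ else p.edir (t - 1)) = _
      rw [if_neg (by omega : ¬ t - 1 = k - 1), if_neg (by omega : ¬ t - 1 = k)]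
    have e2 : q.edir t = e₁ := by
      show (if t = k - 1 then e₁ else if t = k then e₂ else p.edir t) = _
      rw [if_pos h]
    have e3 : q.vert t = p.vert t := if_neg (by omega)
    simp only [MWalk.collider, e1, e2, e3]
    rw [h]
    exact H1 (by omega)
  · by_cases hk : t = k
    · have e1 : q.edir (t - 1) = e₁ := by
        show (if t - 1 = k - 1 then e₁ else if t - 1 = k then e₂ else p.edir (t - 1)) = _
        rw [if_pos (by omega : t - 1 = k - 1)]
      have e2 : q.edir t = e₂ := by
        show (if t = k - 1 then e₁ else if t = k then e₂ else p.edir t) = _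
        rw [if_neg (by omega : ¬ t = k - 1), if_pos hk]
      have e3 : q.vert t = c := if_pos hk
      simp only [MWalk.collider, e1, e2, e3]
      exact H0
    · by_cases hk1 : t = k + 1
      · have e1 : q.edir (t - 1) = e₂ := by
          show (if t - 1 = k - 1 then e₁ else if t - 1 = k then e₂ else p.edir (t - 1)) = _
          rw [if_neg (by omega : ¬ t - 1 = k - 1), if_pos (by omega : t - 1 = k)]
        have e2 : q.edir t = p.edir t := by
          show (if t = k - 1 then e₁ else if t = k then e₂ else p.edir t) = _
          rw [if_neg (by omega : ¬ t = k - 1), if_neg (by omega : ¬ t = k)]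
        have e3 : q.vert t = p.vert t := if_neg (by omega)
        simp only [MWalk.collider, e1, e2, e3]
        rw [hk1]
        exact H2 (by omega)
      · have e1 : q.edir (t - 1) = p.edir (t - 1) := by
          show (if t - 1 = k - 1 then e₁ else if t - 1 = k then e₂ else p.edir (t - 1)) = _
          rw [if_neg (by omega : ¬ t - 1 = k - 1), if_neg (by omega : ¬ t - 1 = k)]
        have e2 : q.edir t = p.edir t := by
          show (if t = k - 1 then e₁ else if t = k then e₂ else p.edir t) = _
          rw [if_neg (by omega : ¬ t = k - 1), if_neg (by omega : ¬ t = k)]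
        have e3 : q.vert t = p.vert t := if_neg (by omega)
        simp only [MWalk.collider, e1, e2, e3]
        exact hact t ht0 htl'

/-- Number of occurrences of `x` among the vertices of the walk. -/
noncomputable def xcount (p : MWalk G y z) (x : V) : ℕ :=
  {i : ℕ | i ≤ p.len ∧ p.vert i = x}.ncard

lemma xcount_lt {q p : MWalk G y z} {x : V} (f : ℕ → ℕ)
    (hmap : ∀ i, i ≤ q.len → q.vert i = x → f i ≤ p.len ∧ p.vert (f i) = x)
    (hinj : ∀ i, i ≤ q.len → q.vert i = x → ∀ j, j ≤ q.len → q.vert j = x → f i = f j → i = j)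
    {m : ℕ} (hm : m ≤ p.len) (hmx : p.vert m = x)
    (hfm : ∀ i, i ≤ q.len → q.vert i = x → f i ≠ m) :
    q.xcount x < p.xcount x := by
  have hBfin : {i : ℕ | i ≤ p.len ∧ p.vert i = x}.Finite :=
    (Set.finite_Iic p.len).subset (fun i hi => hi.1)
  have himg : f '' {i : ℕ | i ≤ q.len ∧ q.vert i = x} ⊆ {i : ℕ | i ≤ p.len ∧ p.vert i = x} := by
    rintro _ ⟨i, ⟨hi1, hi2⟩, rfl⟩
    exact hmap i hi1 hi2
  have hm2 : m ∉ f '' {i : ℕ | i ≤ q.len ∧ q.vert i = x} := by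
    rintro ⟨i, ⟨hi1, hi2⟩, hfi⟩
    exact hfm i hi1 hi2 hfi
  have hss : f '' {i : ℕ | i ≤ q.len ∧ q.vert i = x} ⊂ {i : ℕ | i ≤ p.len ∧ p.vert i = x} :=
    (Set.ssubset_iff_of_subset himg).2 ⟨m, ⟨hm, hmx⟩, hm2⟩
  have hio : Set.InjOn f {i : ℕ | i ≤ q.len ∧ q.vert i = x} :=
    fun i hi j hj hij => hinj i hi.1 hi.2 j hj.1 hj.2 hij
  show {i : ℕ | i ≤ q.len ∧ q.vert i = x}.ncard < {i : ℕ | i ≤ p.len ∧ p.vert i = x}.ncard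
  rw [← Set.ncard_image_of_injOn hio]
  exact Set.ncard_lt_ncard hss hBfin

lemma delete_xcount_lt {p : MWalk G y z} {x : V} {k d : ℕ} (hk : 1 ≤ k) (hd : 1 ≤ d)
    (hkd : k + d ≤ p.len) {e : EdgeDir} (he : edirValid G (p.vert (k - 1)) (p.vert (k + d)) e)
    {m : ℕ} (hm1 : k ≤ m) (hm2 : m < k + d) (hmx : p.vert m = x) :
    (p.delete k d hk hd hkd e he).xcount x < p.xcount x := by
  have hql : (p.delete k d hk hd hkd e he).len = p.len - d := rfl
  have hqv : ∀ i, (p.delete k d hk hd hkd e he).vert i =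
      if i < k then p.vert i else p.vert (i + d) := fun _ => rfl
  apply xcount_lt (fun i => if i < k then i else i + d) (m := m)
  · intro i hi hix
    rw [hql] at hi
    rw [hqv] at hix
    refine ⟨by split_ifs <;> omega, ?_⟩
    split_ifs at hix ⊢ with h
    · exact hix
    · exact hix
  · intro a ha hax b hb hbx hab
    split_ifs at hab <;> omega
  · omega
  · exact hmx
  · intro i hi hix
    rw [hql] at hi
    split_ifs <;> omega

lemma subst_xcount_lt {p : MWalk G y z} {x : V} {k : ℕ} {c : V} (hk0 : 0 < k)
    (hkl : k < p.len) (hc : c ∈ G.verts) {e₁ e₂ : EdgeDir}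
    (h1 : edirValid G (p.vert (k - 1)) c e₁) (h2 : edirValid G c (p.vert (k + 1)) e₂)
    (hkx : p.vert k = x) (hcx : c ≠ x) :
    (p.subst k c hk0 hkl hc e₁ e₂ h1 h2).xcount x < p.xcount x := by
  have hql : (p.subst k c hk0 hkl hc e₁ e₂ h1 h2).len = p.len := rfl
  have hqv : ∀ i, (p.subst k c hk0 hkl hc e₁ e₂ h1 h2).vert i =
      if i = k then c else p.vert i := fun _ => rfl
  apply xcount_lt (fun i => i) (m := k)
  · intro i hi hix
    rw [hql] at hi
    rw [hqv] at hix
    split_ifs at hix with h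
    · exact absurd hix hcx
    · exact ⟨hi, hix⟩
  · intro a _ _ b _ _ h
    exact h
  · exact le_of_lt hkl
  · exact hkx
  · intro i hi hix
    rw [hqv] at hix
    split_ifs at hix with h
    · exact absurd hix hcx
    · exact h

lemma splice_xcount_lt {p : MWalk G y z} {x : V} (i j : ℕ) (hij : i < j) (hj : j ≤ p.len)
    (heq : p.vert i = p.vert j) (hpos : 0 < p.len - (j - i))
    {m : ℕ} (hm1 : i < m) (hm2 : m ≤ j) (hmx : p.vert m = x) :
    (p.splice i j hij hj heq hpos).xcount x < p.xcount x := by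
  have hql : (p.splice i j hij hj heq hpos).len = p.len - (j - i) := rfl
  have hqv : ∀ t, (p.splice i j hij hj heq hpos).vert t =
      if t ≤ i then p.vert t else p.vert (t + (j - i)) := fun _ => rfl
  apply xcount_lt (fun t => if t ≤ i then t else t + (j - i)) (m := m)
  · intro t ht htx
    rw [hql] at ht
    rw [hqv] at htx
    refine ⟨by split_ifs <;> omega, ?_⟩
    split_ifs at htx ⊢ with h
    · exact htx
    · exact htx
  · intro a ha hax b hb hbx hab
    split_ifs at hab <;> omega
  · omega
  · exact hmx
  · intro t ht htx
    rw [hql] at ht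
    split_ifs <;> omega

/-- Under Conditions 1 and 2, any active walk avoiding `x` at its endpoints can be
transformed into an active walk avoiding `x` entirely. -/
lemma remove_vertex (hbi : ∀ a b, ¬ G.bi a b) (hacyc : ∀ a b, G.dir a b → ¬ G.anc b a)
    {x : V}
    (hcond1 : ∀ c ∈ G.children x, G.neighbors x ⊆ G.neighbors c ∪ {c})
    (hcond2 : ∀ c ∈ G.children x, ∀ v ∈ G.children x ∩ G.parents c,
      G.parents v ⊆ G.parents c)
    (hy : y ≠ x) (hz : z ≠ x) (hyz : y ≠ z) {Z : Set V} (hxZ : x ∉ Z) :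
    ∀ n (p : MWalk G y z), p.xcount x ≤ n → p.active Z →
      ∃ q : MWalk G y z, q.active Z ∧ ∀ i ≤ q.len, q.vert i ≠ x := by
  intro n
  induction n with
  | zero =>
    intro p hcount hact
    refine ⟨p, hact, fun i hi hix => ?_⟩
    have hsub : ({i} : Set ℕ) ⊆ {j : ℕ | j ≤ p.len ∧ p.vert j = x} := by
      intro j hj
      rw [Set.mem_singleton_iff] at hj
      subst hj
      exact ⟨hi, hix⟩
    have h1 : 1 ≤ p.xcount x := by
      have := Set.ncard_le_ncard hsub ((Set.finite_Iic p.len).subset (fun a ha => ha.1))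
      rw [Set.ncard_singleton] at this; exact this
    omega
  | succ n ih =>
    intro p hcount hact
    by_cases hex : ∃ k, k ≤ p.len ∧ p.vert k = x
    · obtain ⟨k, hkle, hkx⟩ := hex
      have hk0 : 0 < k := by
        rcases Nat.eq_zero_or_pos k with h | h
        · exfalso
          apply hy
          rw [← p.first, ← h]
          exact hkx
        · exact h
      have hkl : k < p.len := by
        rcases Nat.lt_or_ge k p.len with h | h
        · exact h
        · exfalso
          have hkeq : k = p.len := by omega
          apply hz
          rw [← p.last, ← hkeq]
          exact hkx
      have hv1 := p.valid (k - 1) (by omega)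
      rw [show k - 1 + 1 = k by omega, hkx] at hv1
      have hv2 := p.valid k hkl
      rw [hkx] at hv2
      rcases edir_fwd_or_bwd hbi hv1 with hep | hep <;>
        rcases edir_fwd_or_bwd hbi hv2 with hes | hes
      · -- a → x → b : shortcut a → b
        have hax : G.dir (p.vert (k - 1)) x := by rw [hep] at hv1; exact hv1
        have hxb : G.dir x (p.vert (k + 1)) := by rw [hes] at hv2; exact hv2
        have hab : G.dir (p.vert (k - 1)) (p.vert (k + 1)) :=
          MixedGraph.shortcut hbi hacyc hcond1 hax hxb
        have hkk : 1 ≤ k := hk0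
        have hdd : (1 : ℕ) ≤ 1 := le_refl 1
        have hkd : k + 1 ≤ p.len := by omega
        have he : edirValid G (p.vert (k - 1)) (p.vert (k + 1)) EdgeDir.fwd := hab
        have hqact : (p.delete k 1 hkk hdd hkd EdgeDir.fwd he).active Z := by
          apply delete_active hact
          · intro h1k
            constructor
            · rintro ⟨-, hh1⟩
              exact absurd hh1 not_headAt1_fwd
            · intro _
              refine (hact (k - 1) (by omega) (by omega)).2 ?_
              rintro ⟨-, hcol2⟩
              rw [hep] at hcol2
              exact not_headAt1_fwd hcol2
          · intro hlt
            constructor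
            · rintro ⟨-, hh1⟩
              refine (hact (k + 1) (by omega) hlt).1 ⟨?_, hh1⟩
              simp only [Nat.add_sub_cancel]
              rw [hes]
              exact headAt2_fwd
            · intro hnc
              refine (hact (k + 1) (by omega) hlt).2 ?_
              rintro ⟨-, hcol2⟩
              exact hnc ⟨headAt2_fwd, hcol2⟩
        have hqcnt := delete_xcount_lt (x := x) hkk hdd hkd he (m := k)
          (le_refl k) (by omega) hkx
        exact ih _ (by omega) hqact
      · -- a → x ← b : x is an active collider, detour via a child of x
        have hax : G.dir (p.vert (k - 1)) x := by rw [hep] at hv1; exact hv1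
        have hbx : G.dir (p.vert (k + 1)) x := by rw [hes] at hv2; exact hv2
        have hcolk : p.collider k := by
          constructor
          · rw [hep]
            exact headAt2_fwd
          · rw [hes]
            exact headAt1_bwd
        obtain ⟨w, hw, hancw⟩ := (hact k hk0 hkl).1 hcolk
        rw [hkx] at hancw
        have hwx : w ≠ x := by
          rintro rfl
          rcases hw with hw | hw
          · exact hxZ hw
          · rcases hw with hw | hw
            · exact hy hw.symm
            · rw [Set.mem_singleton_iff] at hw
              exact hz hw.symm
        obtain ⟨c, hxc, hcw⟩ : ∃ c, G.dir x c ∧ G.anc c w := by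
          rcases hancw.cases_head with heq2 | ⟨c, h1, h2⟩
          · exact absurd heq2.symm hwx
          · exact ⟨c, h1, h2⟩
        have hac : G.dir (p.vert (k - 1)) c := MixedGraph.shortcut hbi hacyc hcond1 hax hxc
        have hbc : G.dir (p.vert (k + 1)) c := MixedGraph.shortcut hbi hacyc hcond1 hbx hxc
        have hcmem : c ∈ G.verts := (G.dir_mem hxc).2
        have h1' : edirValid G (p.vert (k - 1)) c EdgeDir.fwd := hac
        have h2' : edirValid G c (p.vert (k + 1)) EdgeDir.bwd := hbc
        have hqact : (p.subst k c hk0 hkl hcmem EdgeDir.fwd EdgeDir.bwd h1' h2').active Z := by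
          apply subst_active hact
          · intro h1k
            constructor
            · rintro ⟨-, hh1⟩
              exact absurd hh1 not_headAt1_fwd
            · intro _
              refine (hact (k - 1) (by omega) (by omega)).2 ?_
              rintro ⟨-, hcol2⟩
              rw [hep] at hcol2
              exact not_headAt1_fwd hcol2
          · constructor
            · intro _
              exact ⟨w, hw, hcw⟩
            · intro hnc
              exact absurd ⟨headAt2_fwd, headAt1_bwd⟩ hnc
          · intro hlt
            constructor
            · rintro ⟨hh2, -⟩
              exact absurd hh2 not_headAt2_bwd
            · intro _
              refine (hact (k + 1) (by omega) hlt).2 ?_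
              rintro ⟨hcol1, -⟩
              simp only [Nat.add_sub_cancel] at hcol1
              rw [hes] at hcol1
              exact not_headAt2_bwd hcol1
        have hcx : c ≠ x := (MixedGraph.dir_ne' hacyc hxc).symm
        have hqcnt := subst_xcount_lt hk0 hkl hcmem h1' h2' hkx hcx
        exact ih _ (by omega) hqact
      · -- a ← x → b : both are children of x
        have hxa : G.dir x (p.vert (k - 1)) := by rw [hep] at hv1; exact hv1
        have hxb : G.dir x (p.vert (k + 1)) := by rw [hes] at hv2; exact hv2
        by_cases hab : p.vert (k - 1) = p.vert (k + 1)
        · -- collapse by splicing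
          have hpos : 0 < p.len - (k + 1 - (k - 1)) := by
            rcases Nat.lt_or_ge p.len 3 with h3 | h3
            · exfalso
              have hk1 : k = 1 := by omega
              have hl2 : p.len = 2 := by omega
              apply hyz
              calc y = p.vert 0 := p.first.symm
                _ = p.vert (k - 1) := by rw [hk1]
                _ = p.vert (k + 1) := hab
                _ = p.vert p.len := by rw [hk1, hl2]
                _ = z := p.last
            · omega
          have hij' : k - 1 < k + 1 := by omega
          have hj' : k + 1 ≤ p.len := by omega
          have hqact := splice_active hbi hact (k - 1) (k + 1) hij' hj' hab hpos
          have hqcnt := splice_xcount_lt (x := x) (k - 1) (k + 1) hij' hj' hab hpos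
            (m := k) (by omega) (by omega) hkx
          exact ih _ (by omega) hqact
        · rcases MixedGraph.children_adj hbi hacyc hcond1 hxa hxb hab with hd | hd
          · -- a → b
            by_cases hcoll : 1 < k ∧ headAt2 (p.edir (k - 1 - 1))
            · -- a is an interior collider: reroute using Condition 2
              obtain ⟨h1k, hh2⟩ := hcoll
              have hef : p.edir (k - 1 - 1) = EdgeDir.fwd := by
                rcases edir_fwd_or_bwd hbi (p.valid (k - 1 - 1) (by omega)) with h | h
                · exact h
                · rw [h] at hh2
                  exact absurd hh2 not_headAt2_bwd
              have hca : G.dir (p.vert (k - 1 - 1)) (p.vert (k - 1)) := by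
                have := p.valid (k - 1 - 1) (by omega)
                rw [hef, show k - 1 - 1 + 1 = k - 1 by omega] at this
                exact this
              have hcb : G.dir (p.vert (k - 1 - 1)) (p.vert (k + 1)) :=
                hcond2 (p.vert (k + 1)) hxb (p.vert (k - 1)) ⟨hxa, hd⟩ hca
              have hkk : 1 ≤ k - 1 := by omega
              have hdd : (1 : ℕ) ≤ 2 := by omega
              have hkd : k - 1 + 2 ≤ p.len := by omega
              have he : edirValid G (p.vert (k - 1 - 1)) (p.vert (k - 1 + 2)) EdgeDir.fwd := by
                rw [show k - 1 + 2 = k + 1 by omega]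
                exact hcb
              have hqact : (p.delete (k - 1) 2 hkk hdd hkd EdgeDir.fwd he).active Z := by
                apply delete_active hact
                · intro h1k'
                  constructor
                  · rintro ⟨-, hh1⟩
                    exact absurd hh1 not_headAt1_fwd
                  · intro _
                    refine (hact (k - 1 - 1) (by omega) (by omega)).2 ?_
                    rintro ⟨-, hcol2⟩
                    rw [hef] at hcol2
                    exact not_headAt1_fwd hcol2
                · intro hlt
                  rw [show k - 1 + 2 = k + 1 by omega] at hlt ⊢
                  constructor
                  · rintro ⟨-, hh1⟩
                    refine (hact (k + 1) (by omega) hlt).1 ⟨?_, hh1⟩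
                    simp only [Nat.add_sub_cancel]
                    rw [hes]
                    exact headAt2_fwd
                  · intro hnc
                    refine (hact (k + 1) (by omega) hlt).2 ?_
                    rintro ⟨-, hcol2⟩
                    exact hnc ⟨headAt2_fwd, hcol2⟩
              have hqcnt := delete_xcount_lt (x := x) hkk hdd hkd he (m := k)
                (by omega) (by omega) hkx
              exact ih _ (by omega) hqact
            · -- a is not an interior collider: simple shortcut a → b
              have hkk : 1 ≤ k := hk0
              have hdd : (1 : ℕ) ≤ 1 := le_refl 1
              have hkd : k + 1 ≤ p.len := by omega
              have he : edirValid G (p.vert (k - 1)) (p.vert (k + 1)) EdgeDir.fwd := hd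
              have hqact : (p.delete k 1 hkk hdd hkd EdgeDir.fwd he).active Z := by
                apply delete_active hact
                · intro h1k
                  constructor
                  · rintro ⟨-, hh1⟩
                    exact absurd hh1 not_headAt1_fwd
                  · intro _
                    refine (hact (k - 1) (by omega) (by omega)).2 ?_
                    rintro ⟨hcol1, -⟩
                    exact hcoll ⟨h1k, hcol1⟩
                · intro hlt
                  constructor
                  · rintro ⟨-, hh1⟩
                    refine (hact (k + 1) (by omega) hlt).1 ⟨?_, hh1⟩
                    simp only [Nat.add_sub_cancel]
                    rw [hes]
                    exact headAt2_fwd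
                  · intro hnc
                    refine (hact (k + 1) (by omega) hlt).2 ?_
                    rintro ⟨-, hcol2⟩
                    exact hnc ⟨headAt2_fwd, hcol2⟩
              have hqcnt := delete_xcount_lt (x := x) hkk hdd hkd he (m := k)
                (le_refl k) (by omega) hkx
              exact ih _ (by omega) hqact
          · -- b → a
            by_cases hcoll : k + 1 < p.len ∧ headAt1 (p.edir (k + 1))
            · -- b is an interior collider: reroute using Condition 2
              obtain ⟨hklt, hh1⟩ := hcoll
              have heb : p.edir (k + 1) = EdgeDir.bwd := by
                rcases edir_fwd_or_bwd hbi (p.valid (k + 1) hklt) with h | h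
                · rw [h] at hh1
                  exact absurd hh1 not_headAt1_fwd
                · exact h
              have hcb : G.dir (p.vert (k + 1 + 1)) (p.vert (k + 1)) := by
                have := p.valid (k + 1) hklt
                rw [heb] at this
                exact this
              have hca : G.dir (p.vert (k + 1 + 1)) (p.vert (k - 1)) :=
                hcond2 (p.vert (k - 1)) hxa (p.vert (k + 1)) ⟨hxb, hd⟩ hcb
              have hkk : 1 ≤ k := hk0
              have hdd : (1 : ℕ) ≤ 2 := by omega
              have hkd : k + 2 ≤ p.len := by omega
              have he : edirValid G (p.vert (k - 1)) (p.vert (k + 2)) EdgeDir.bwd := by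
                rw [show k + 2 = k + 1 + 1 by omega]
                exact hca
              have hqact : (p.delete k 2 hkk hdd hkd EdgeDir.bwd he).active Z := by
                apply delete_active hact
                · intro h1k
                  constructor
                  · rintro ⟨hh2', -⟩
                    refine (hact (k - 1) (by omega) (by omega)).1 ⟨hh2', ?_⟩
                    rw [hep]
                    exact headAt1_bwd
                  · intro hnc
                    refine (hact (k - 1) (by omega) (by omega)).2 ?_
                    rintro ⟨hcol1, -⟩
                    exact hnc ⟨hcol1, headAt1_bwd⟩
                · intro hlt
                  constructor
                  · rintro ⟨hh2', -⟩
                    exact absurd hh2' not_headAt2_bwd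
                  · intro _
                    refine (hact (k + 2) (by omega) hlt).2 ?_
                    rintro ⟨hcol1, -⟩
                    rw [show k + 2 - 1 = k + 1 by omega, heb] at hcol1
                    exact not_headAt2_bwd hcol1
              have hqcnt := delete_xcount_lt (x := x) hkk hdd hkd he (m := k)
                (le_refl k) (by omega) hkx
              exact ih _ (by omega) hqact
            · -- b is not an interior collider: simple shortcut b → a
              have hkk : 1 ≤ k := hk0
              have hdd : (1 : ℕ) ≤ 1 := le_refl 1
              have hkd : k + 1 ≤ p.len := by omega
              have he : edirValid G (p.vert (k - 1)) (p.vert (k + 1)) EdgeDir.bwd := hd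
              have hqact : (p.delete k 1 hkk hdd hkd EdgeDir.bwd he).active Z := by
                apply delete_active hact
                · intro h1k
                  constructor
                  · rintro ⟨hh2', -⟩
                    refine (hact (k - 1) (by omega) (by omega)).1 ⟨hh2', ?_⟩
                    rw [hep]
                    exact headAt1_bwd
                  · intro hnc
                    refine (hact (k - 1) (by omega) (by omega)).2 ?_
                    rintro ⟨hcol1, -⟩
                    exact hnc ⟨hcol1, headAt1_bwd⟩
                · intro hlt
                  constructor
                  · rintro ⟨hh2', -⟩
                    exact absurd hh2' not_headAt2_bwd
                  · intro _
                    refine (hact (k + 1) (by omega) hlt).2 ?_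
                    rintro ⟨-, hcol2⟩
                    exact hcoll ⟨hlt, hcol2⟩
              have hqcnt := delete_xcount_lt (x := x) hkk hdd hkd he (m := k)
                (le_refl k) (by omega) hkx
              exact ih _ (by omega) hqact
      · -- a ← x ← b : shortcut b → a
        have hxa : G.dir x (p.vert (k - 1)) := by rw [hep] at hv1; exact hv1
        have hbx : G.dir (p.vert (k + 1)) x := by rw [hes] at hv2; exact hv2
        have hba : G.dir (p.vert (k + 1)) (p.vert (k - 1)) :=
          MixedGraph.shortcut hbi hacyc hcond1 hbx hxa
        have hkk : 1 ≤ k := hk0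
        have hdd : (1 : ℕ) ≤ 1 := le_refl 1
        have hkd : k + 1 ≤ p.len := by omega
        have he : edirValid G (p.vert (k - 1)) (p.vert (k + 1)) EdgeDir.bwd := hba
        have hqact : (p.delete k 1 hkk hdd hkd EdgeDir.bwd he).active Z := by
          apply delete_active hact
          · intro h1k
            constructor
            · rintro ⟨hh2', -⟩
              refine (hact (k - 1) (by omega) (by omega)).1 ⟨hh2', ?_⟩
              rw [hep]
              exact headAt1_bwd
            · intro hnc
              refine (hact (k - 1) (by omega) (by omega)).2 ?_
              rintro ⟨hcol1, -⟩
              exact hnc ⟨hcol1, headAt1_bwd⟩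
          · intro hlt
            constructor
            · rintro ⟨hh2', -⟩
              exact absurd hh2' not_headAt2_bwd
            · intro _
              refine (hact (k + 1) (by omega) hlt).2 ?_
              rintro ⟨hcol1, -⟩
              simp only [Nat.add_sub_cancel] at hcol1
              rw [hes] at hcol1
              exact not_headAt2_bwd hcol1
        have hqcnt := delete_xcount_lt (x := x) hkk hdd hkd he (m := k)
          (le_refl k) (by omega) hkx
        exact ih _ (by omega) hqact
    · push_neg at hex
      exact ⟨p, hact, hex⟩

end MWalk

/-- Local Markov property: in an acyclic bidirected-free graph, the parents of `z`
d-separate `z` from any non-parent non-descendant `w`. -/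
lemma localMarkov {G : MixedGraph V} (hbi : ∀ a b, ¬ G.bi a b)
    (hacyc : ∀ a b, G.dir a b → ¬ G.anc b a) {w z : V}
    (hpa : ¬ G.dir w z) (hanc : ¬ G.anc z w) : mSep G w z (G.parents z) := by
  intro p
  have hlp := p.len_pos
  have hval := p.valid (p.len - 1) (by omega)
  rw [show p.len - 1 + 1 = p.len by omega, p.last] at hval
  rcases edir_fwd_or_bwd hbi hval with hf | hb
  · rw [hf] at hval
    have hd : G.dir (p.vert (p.len - 1)) z := hval
    by_cases h1 : p.len = 1
    · exfalso
      apply hpa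
      have h0 : p.vert 0 = w := p.first
      rw [show p.len - 1 = 0 by omega, h0] at hd
      exact hd
    · refine ⟨p.len - 1, by omega, by omega, Or.inr ⟨?_, hd⟩⟩
      intro hc
      have h2 := hc.2
      rw [hf] at h2
      exact not_headAt1_fwd h2
  · classical
    have hT : ∃ m, m < p.len ∧ ∀ r, m ≤ r → r < p.len → p.edir r = EdgeDir.bwd := by
      refine ⟨p.len - 1, by omega, fun r h1 h2 => ?_⟩
      rw [show r = p.len - 1 by omega]
      exact hb
    set j := Nat.find hT with hjdef
    obtain ⟨hjlen, hjall⟩ := Nat.find_spec hT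
    have chain : ∀ d, d ≤ p.len - j → G.anc z (p.vert (p.len - d)) := by
      intro d
      induction d with
      | zero =>
        intro _
        rw [Nat.sub_zero, p.last]
        exact Relation.ReflTransGen.refl
      | succ d ih =>
        intro hd2
        have h3 := ih (by omega)
        have hr : p.edir (p.len - (d + 1)) = EdgeDir.bwd := hjall _ (by omega) (by omega)
        have hv2 := p.valid (p.len - (d + 1)) (by omega)
        rw [hr] at hv2
        have hv3 : G.dir (p.vert (p.len - d)) (p.vert (p.len - (d + 1))) := by
          rw [show p.len - (d + 1) + 1 = p.len - d by omega] at hv2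
          exact hv2
        exact h3.tail hv3
    have hzj : G.anc z (p.vert j) := by
      have := chain (p.len - j) (le_refl _)
      rwa [show p.len - (p.len - j) = j by omega] at this
    have hj0 : 0 < j := by
      rcases Nat.eq_zero_or_pos j with h0 | h0
      · exfalso
        apply hanc
        have h0' : p.vert j = w := by rw [h0, p.first]
        rwa [h0'] at hzj
      · exact h0
    have hjm : p.edir (j - 1) = EdgeDir.fwd := by
      have hmin := Nat.find_min hT (m := j - 1) (by omega)
      push_neg at hmin
      obtain ⟨r, hr1, hr2, hr3⟩ := hmin (by omega)
      have hrj : r = j - 1 := by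
        by_contra hrne
        exact hr3 (hjall r (by omega) hr2)
      rw [hrj] at hr3
      rcases edir_fwd_or_bwd hbi (p.valid (j - 1) (by omega)) with h | h
      · exact h
      · exact absurd h hr3
    refine ⟨j, hj0, hjlen, Or.inl ⟨⟨?_, ?_⟩, ?_⟩⟩
    · rw [hjm]
      exact headAt2_fwd
    · rw [hjall j (le_refl j) hjlen]
      exact headAt1_bwd
    · rintro u hu hancu
      have hancjz : ¬ G.anc (p.vert j) z := by
        intro hjz
        have hveq : p.vert j = z := MixedGraph.anc_antisymm' hacyc hjz hzj
        have := p.inj j p.len hjlen.le (le_refl _) (by rw [hveq, p.last])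
        omega
      rcases hu with hu | hu
      · exact hancjz (hancu.tail hu)
      · rcases hu with hu | hu
        · rw [hu] at hancu
          exact hanc (hzj.trans hancu)
        · rw [Set.mem_singleton_iff] at hu
          rw [hu] at hancu
          exact hancjz hancu

lemma edirValid_of_induce {G : MixedGraph V} {W : Set V} {u v : V} {e : EdgeDir}
    (h : edirValid (G.induce W) u v e) : edirValid G u v e := by
  cases e with
  | fwd => exact h.1
  | bwd => exact h.1
  | bidir => exact h.1

lemma induce_anc_mono {G : MixedGraph V} {W : Set V} {a b : V}
    (h : (G.induce W).anc a b) : G.anc a b :=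
  Relation.ReflTransGen.mono (r := (G.induce W).dir) (p := G.dir) (fun _ _ hd => hd.1) _ _ h

/-- Under Condition 1, ancestry between non-`x` vertices transfers to `G - x`. -/
lemma anc_transfer {G : MixedGraph V} (hbi : ∀ a b, ¬ G.bi a b)
    (hacyc : ∀ a b, G.dir a b → ¬ G.anc b a) {x : V}
    (hcond1 : ∀ c ∈ G.children x, G.neighbors x ⊆ G.neighbors c ∪ {c})
    {b : V} (hb : b ≠ x) {a : V} (ha : a ≠ x) (h : G.anc a b) :
    (G.induce (G.verts \ {x})).anc a b := by
  have key : ∀ {a : V}, G.anc a b →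
      (a ≠ x → (G.induce (G.verts \ {x})).anc a b) ∧
      (a = x → ∀ p, G.dir p x → p ≠ x → (G.induce (G.verts \ {x})).anc p b) := by
    intro a h
    induction h using Relation.ReflTransGen.head_induction_on with
    | refl =>
      exact ⟨fun _ => Relation.ReflTransGen.refl, fun hax => absurd hax hb⟩
    | head hac hcb ih =>
      rename_i a' c'
      constructor
      · intro ha'
        by_cases hc : c' = x
        · subst hc
          exact ih.2 rfl a' hac ha'
        · have step : (G.induce (G.verts \ {x})).dir a' c' :=
            ⟨hac, ⟨(G.dir_mem hac).1, ha'⟩, ⟨(G.dir_mem hac).2, hc⟩⟩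
          exact Relation.ReflTransGen.head step (ih.1 hc)
      · intro haeq p hp hpne
        rw [haeq] at hac
        have hcx : c' ≠ x := (MixedGraph.dir_ne' hacyc hac).symm
        have hpc : G.dir p c' := MixedGraph.shortcut hbi hacyc hcond1 hp hac
        have step : (G.induce (G.verts \ {x})).dir p c' :=
          ⟨hpc, ⟨(G.dir_mem hpc).1, hpne⟩, ⟨(G.dir_mem hpc).2, hcx⟩⟩
        exact Relation.ReflTransGen.head step (ih.1 hcx)
  exact (key h).1 ha

/-- m-separation in `G` implies m-separation in any induced subgraph. -/
lemma mSep_induce_of_mSep {G : MixedGraph V} {W : Set V} {a b : V} {Z : Set V}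
    (h : mSep G a b Z) : mSep (G.induce W) a b Z := by
  intro p
  have hmem : ∀ i, i ≤ p.len → p.vert i ∈ G.verts := fun i hi => (p.mem i hi).1
  have hval : ∀ i, i < p.len → edirValid G (p.vert i) (p.vert (i + 1)) (p.edir i) :=
    fun i hi => edirValid_of_induce (p.valid i hi)
  obtain ⟨i, h1, h2, hcase⟩ :=
    h ⟨p.len, p.len_pos, p.vert, p.edir, p.first, p.last, hmem, p.inj, hval⟩
  refine ⟨i, h1, h2, ?_⟩
  rcases hcase with ⟨hc, hno⟩ | ⟨hc, hz⟩
  · exact Or.inl ⟨hc, fun w hw hanc => hno w hw (induce_anc_mono hanc)⟩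
  · exact Or.inr ⟨hc, hz⟩

/-- An active `x`-free walk in `G` gives an active walk in `G - x`. -/
lemma MWalk.transfer_induce {G : MixedGraph V} (hbi : ∀ a b, ¬ G.bi a b)
    (hacyc : ∀ a b, G.dir a b → ¬ G.anc b a) {x : V}
    (hcond1 : ∀ c ∈ G.children x, G.neighbors x ⊆ G.neighbors c ∪ {c})
    {y z : V} (hy : y ≠ x) (hz : z ≠ x) {Z : Set V} (hxZ : x ∉ Z)
    (q : MWalk G y z) (hfree : ∀ i ≤ q.len, q.vert i ≠ x) (hact : q.active Z) :
    ∃ q' : MWalk (G.induce (G.verts \ {x})) y z, q'.active Z := by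
  have hval : ∀ i, i < q.len →
      edirValid (G.induce (G.verts \ {x})) (q.vert i) (q.vert (i + 1)) (q.edir i) := by
    intro i hi
    have hv := q.valid i hi
    have hvi := hfree i (by omega)
    have hvi1 := hfree (i + 1) (by omega)
    have hm := q.mem i (by omega)
    have hm1 := q.mem (i + 1) (by omega)
    rcases edir_fwd_or_bwd hbi hv with h | h <;> rw [h] at hv ⊢
    · exact ⟨hv, ⟨hm, hvi⟩, ⟨hm1, hvi1⟩⟩
    · exact ⟨hv, ⟨hm1, hvi1⟩, ⟨hm, hvi⟩⟩
  refine ⟨⟨q.len, q.len_pos, q.vert, q.edir, q.first, q.last,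
    fun i hi => ⟨q.mem i hi, q.mem i hi, hfree i hi⟩, hval⟩, ?_⟩
  intro i h0 hl
  have hl' : i < q.len := hl
  constructor
  · intro hc
    obtain ⟨w, hw, hanc⟩ := (hact i h0 hl').1 hc
    refine ⟨w, hw, ?_⟩
    have hwx : w ≠ x := by
      rintro rfl
      rcases hw with hw | hw
      · exact hxZ hw
      · rcases hw with hw | hw
        · exact hy hw.symm
        · rw [Set.mem_singleton_iff] at hw
          exact hz hw.symm
    exact anc_transfer hbi hacyc hcond1 hwx (hfree i (by omega)) hanc
  · exact (hact i h0 hl').2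

/-- Conditions 1 and 2 imply removability. -/
lemma removable_of_conds {G : MixedGraph V} (hbi : ∀ a b, ¬ G.bi a b)
    (hacyc : ∀ a b, G.dir a b → ¬ G.anc b a) {x : V}
    (hcond1 : ∀ c ∈ G.children x, G.neighbors x ⊆ G.neighbors c ∪ {c})
    (hcond2 : ∀ c ∈ G.children x, ∀ v ∈ G.children x ∩ G.parents c,
      G.parents v ⊆ G.parents c) :
    G.Removable x := by
  intro y z hyv hzv hy hz hyz Z hZ
  have hxZ : x ∉ Z := fun hxZ' => (hZ hxZ').2 (Set.mem_insert x {y, z})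
  constructor
  · exact fun h => mSep_induce_of_mSep h
  · intro hsep'
    by_contra hnsep
    unfold mSep at hnsep
    push_neg at hnsep
    obtain ⟨p, hpb⟩ := hnsep
    rw [MPath.not_blocked_iff] at hpb
    obtain ⟨q, hqact, hqfree⟩ := MWalk.remove_vertex hbi hacyc hcond1 hcond2 hy hz hyz hxZ
      (p.toWalk.xcount x) p.toWalk (le_refl _) hpb
    obtain ⟨q', hq'act⟩ := MWalk.transfer_induce hbi hacyc hcond1 hy hz hxZ q hqfree hqact
    have hbi' : ∀ a b, ¬ (G.induce (G.verts \ {x})).bi a b := fun a b h => hbi a b h.1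
    obtain ⟨r, hr⟩ := MWalk.to_unblocked_path hbi' hyz q'.len q' (le_refl _) hq'act
    exact hr (hsep' r)

/-- A single-edge path. -/
def mkPath1 {G : MixedGraph V} {a b : V} (e : EdgeDir) (hv : edirValid G a b e)
    (hab : a ≠ b) (ha : a ∈ G.verts) (hb : b ∈ G.verts) : MPath G a b where
  len := 1
  len_pos := one_pos
  vert i := if i = 0 then a else b
  edir _ := e
  first := by norm_num
  last := by norm_num
  mem i hi := by
    split
    · exact ha
    · exact hb
  inj i j hi hj hij := by
    interval_cases i <;> interval_cases j <;> simp_all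
  valid i hi := by
    have h0 : i = 0 := by omega
    subst h0
    simpa using hv

/-- A two-edge path. -/
def mkPath2 {G : MixedGraph V} {a b c : V} (e₁ e₂ : EdgeDir)
    (h1 : edirValid G a b e₁) (h2 : edirValid G b c e₂)
    (hab : a ≠ b) (hac : a ≠ c) (hbc : b ≠ c)
    (ha : a ∈ G.verts) (hb : b ∈ G.verts) (hc : c ∈ G.verts) : MPath G a c where
  len := 2
  len_pos := by norm_num
  vert i := if i = 0 then a else if i = 1 then b else c
  edir i := if i = 0 then e₁ else e₂
  first := by norm_num
  last := by norm_num
  mem i hi := by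
    split
    · exact ha
    · split
      · exact hb
      · exact hc
  inj i j hi hj hij := by
    interval_cases i <;> interval_cases j <;> simp_all
  valid i hi := by
    interval_cases i
    · simpa using h1
    · simpa using h2

/-- A three-edge path. -/
def mkPath3 {G : MixedGraph V} {a b c d : V} (e₁ e₂ e₃ : EdgeDir)
    (h1 : edirValid G a b e₁) (h2 : edirValid G b c e₂) (h3 : edirValid G c d e₃)
    (hab : a ≠ b) (hac : a ≠ c) (had : a ≠ d) (hbc : b ≠ c) (hbd : b ≠ d) (hcd : c ≠ d)
    (ha : a ∈ G.verts) (hb : b ∈ G.verts) (hc : c ∈ G.verts) (hd : d ∈ G.verts) :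
    MPath G a d where
  len := 3
  len_pos := by norm_num
  vert i := if i = 0 then a else if i = 1 then b else if i = 2 then c else d
  edir i := if i = 0 then e₁ else if i = 1 then e₂ else e₃
  first := by norm_num
  last := by norm_num
  mem i hi := by
    split
    · exact ha
    · split
      · exact hb
      · split
        · exact hc
        · exact hd
  inj i j hi hj hij := by
    interval_cases i <;> interval_cases j <;> simp_all
  valid i hi := by
    interval_cases i
    · simpa using h1
    · simpa using h2
    · simpa using h3

end Stmt11Aux

/-- In a DAG `G`, if `X` satisfies Condition 1, then `X` satisfies
Condition 2 — and therefore `X` is removable — iff for every v-structure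
`(X → V ← Y) ∈ VS(X; G)`, every `Z ∈ Ne(X) ∖ {V}`, and every `S ⊆ Mb(X) ∖ {V, Y, Z}`,
the set `S ∪ {X, V}` does not d-separate `Y` and `Z` in `G`. -/
theorem stmt_11 {V : Type*} [Fintype V] (G : MixedGraph V) (hG : G.IsDAG)
    (x : V) (hx : x ∈ G.verts)
    (hcond1 : ∀ z ∈ G.children x, G.neighbors x ⊆ G.neighbors z ∪ {z}) :
    ((∀ z ∈ G.children x, ∀ v ∈ G.children x ∩ G.parents z,
        G.parents v ⊆ G.parents z) ↔
      (∀ v y, G.dir x v → G.dir y v → y ≠ x → ¬ G.adj x y →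
        ∀ z ∈ G.neighbors x, z ≠ v →
          ∀ S ⊆ G.mb x \ {v, y, z}, ¬ mSep G y z (S ∪ {x, v}))) ∧
    (G.Removable x ↔
      (∀ v y, G.dir x v → G.dir y v → y ≠ x → ¬ G.adj x y →
        ∀ z ∈ G.neighbors x, z ≠ v →
          ∀ S ⊆ G.mb x \ {v, y, z}, ¬ mSep G y z (S ∪ {x, v}))) := by
  obtain ⟨hmag, hbi⟩ := hG
  have hacyc : ∀ a b, G.dir a b → ¬ G.anc b a := hmag.no_dir_cycle
  -- Condition 2 implies the v-structure criterion.
  have hC2toRHS : (∀ z ∈ G.children x, ∀ v ∈ G.children x ∩ G.parents z,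
        G.parents v ⊆ G.parents z) →
      (∀ v y, G.dir x v → G.dir y v → y ≠ x → ¬ G.adj x y →
        ∀ z ∈ G.neighbors x, z ≠ v →
          ∀ S ⊆ G.mb x \ {v, y, z}, ¬ mSep G y z (S ∪ {x, v})) := by
    intro hcond2 v yy hxv hyv hyx hnadj zz hzz hzzv S hS hsep
    obtain ⟨hzzx, hzadj⟩ := hzz
    have hzv : G.dir zz v ∨ G.dir v zz := by
      rcases hcond1 v hxv ⟨hzzx, hzadj⟩ with hn | hs
      · rcases hn.2 with h | h | h
        · exact Or.inr h
        · exact Or.inl h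
        · exact absurd h (hbi v zz)
      · exact absurd (Set.mem_singleton_iff.mp hs) hzzv
    have hyyzz : yy ≠ zz := by
      rintro rfl
      exact hnadj hzadj
    rcases hzv with hzv | hvz
    · -- the path yy → v ← zz is unblocked
      let p2 := mkPath2 (G := G) EdgeDir.fwd EdgeDir.bwd hyv hzv
        (MixedGraph.dir_ne' hacyc hyv) hyyzz (Ne.symm hzzv)
        (G.dir_mem hyv).1 (G.dir_mem hyv).2 (G.dir_mem hzv).1
      obtain ⟨i, h1, h2, hcase⟩ := hsep p2
      have hlen : p2.len = 2 := rfl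
      have hi1 : i = 1 := by omega
      subst hi1
      rcases hcase with ⟨hc, hno⟩ | ⟨hc, hnz⟩
      · exact hno v (Or.inl (Or.inr (Or.inr rfl))) Relation.ReflTransGen.refl
      · exact hc ⟨headAt2_fwd, headAt1_bwd⟩
    · -- then zz is a child of x, and Condition 2 gives the edge yy → zz
      have hxzz : G.dir x zz := by
        rcases hzadj with h | h | h
        · exact h
        · exact absurd ((MixedGraph.anc_of_dir hxv).trans (MixedGraph.anc_of_dir hvz))
            (hacyc zz x h)
        · exact absurd h (hbi x zz)
      have hdir : G.dir yy zz := hcond2 zz hxzz v ⟨hxv, hvz⟩ hyv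
      let p1 := mkPath1 (G := G) EdgeDir.fwd hdir hyyzz
        (G.dir_mem hdir).1 (G.dir_mem hdir).2
      obtain ⟨i, h1, h2, -⟩ := hsep p1
      have hlen : p1.len = 1 := rfl
      omega
  -- Failure of Condition 2 yields a witness configuration.
  have hsetup : ¬ (∀ z ∈ G.children x, ∀ v ∈ G.children x ∩ G.parents z,
        G.parents v ⊆ G.parents z) →
      ∃ z₀ v w, G.dir x z₀ ∧ G.dir x v ∧ G.dir v z₀ ∧ G.dir w v ∧ ¬ G.dir w z₀ ∧
        w ≠ x ∧ w ≠ z₀ ∧ v ≠ z₀ ∧ ¬ G.anc z₀ w ∧ ¬ G.adj x w := by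
    intro hnc2
    push_neg at hnc2
    obtain ⟨z₀, hz₀, v, hv, hsub⟩ := hnc2
    obtain ⟨w, hwv, hwz⟩ := Set.not_subset.mp hsub
    have hxz₀ : G.dir x z₀ := hz₀
    have hxv : G.dir x v := hv.1
    have hvz₀ : G.dir v z₀ := hv.2
    have hwv' : G.dir w v := hwv
    have hwz' : ¬ G.dir w z₀ := hwz
    have hwx : w ≠ x := by
      rintro rfl
      exact hwz' hxz₀
    have hwz0 : w ≠ z₀ := by
      rintro rfl
      exact hacyc v w hvz₀ (MixedGraph.anc_of_dir hwv')
    have hancwz : G.anc w z₀ := (MixedGraph.anc_of_dir hwv').trans (MixedGraph.anc_of_dir hvz₀)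
    have hnanc : ¬ G.anc z₀ w := fun h => hwz0 (MixedGraph.anc_antisymm' hacyc hancwz h)
    have hnadj : ¬ G.adj x w := by
      intro hadj
      rcases hcond1 z₀ hxz₀ ⟨hwx, hadj⟩ with hn | hs
      · rcases hn.2 with h | h | h
        · exact hacyc z₀ w h hancwz
        · exact hwz' h
        · exact hbi z₀ w h
      · exact hwz0 (Set.mem_singleton_iff.mp hs)
    exact ⟨z₀, v, w, hxz₀, hxv, hvz₀, hwv', hwz', hwx, hwz0,
      MixedGraph.dir_ne' hacyc hvz₀, hnanc, hnadj⟩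
  -- Failure of Condition 2 refutes the v-structure criterion.
  have hNRHS : ¬ (∀ z ∈ G.children x, ∀ v ∈ G.children x ∩ G.parents z,
        G.parents v ⊆ G.parents z) →
      ¬ (∀ v y, G.dir x v → G.dir y v → y ≠ x → ¬ G.adj x y →
        ∀ z ∈ G.neighbors x, z ≠ v →
          ∀ S ⊆ G.mb x \ {v, y, z}, ¬ mSep G y z (S ∪ {x, v})) := by
    intro hnc2 hRHS
    obtain ⟨z₀, v, w, hxz₀, hxv, hvz₀, hwv, hwz, hwx, hwz0, hvz0ne, hnanc, hnadj⟩ :=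
      hsetup hnc2
    have hz₀x : z₀ ≠ x := (MixedGraph.dir_ne' hacyc hxz₀).symm
    have hvx : v ≠ x := (MixedGraph.dir_ne' hacyc hxv).symm
    have hSsub : G.parents z₀ \ {x, v} ⊆ G.mb x \ {v, w, z₀} := by
      rintro u ⟨hu, hnotin⟩
      have hux : u ≠ x := fun h => hnotin (Or.inl h)
      have huv : u ≠ v := fun h => hnotin (Or.inr h)
      have huz : u ≠ z₀ := MixedGraph.dir_ne' hacyc hu
      refine ⟨⟨hux, ?_⟩, ?_⟩
      · refine ⟨mkPath2 (G := G) EdgeDir.fwd EdgeDir.bwd hu hxz₀ huz hux hz₀x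
          (G.dir_mem hu).1 (G.dir_mem hu).2 hx, ?_⟩
        intro i hi1 hi2
        have hi : i = 1 := by
          have hlen : (mkPath2 (G := G) EdgeDir.fwd EdgeDir.bwd hu hxz₀ huz hux hz₀x
            (G.dir_mem hu).1 (G.dir_mem hu).2 hx).len = 2 := rfl
          omega
        subst hi
        exact ⟨headAt2_fwd, headAt1_bwd⟩
      · rintro (h | h | h)
        · exact huv h
        · exact hwz (h ▸ hu)
        · exact huz h
    have hneighbors : z₀ ∈ G.neighbors x := ⟨hz₀x, Or.inl hxz₀⟩
    have happ := hRHS v w hxv hwv hwx hnadj z₀ hneighbors (Ne.symm hvz0ne)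
      (G.parents z₀ \ {x, v}) hSsub
    apply happ
    have hunion : (G.parents z₀ \ {x, v}) ∪ {x, v} = G.parents z₀ := by
      apply Set.diff_union_of_subset
      rintro u (rfl | rfl)
      · exact hxz₀
      · exact hvz₀
    rw [hunion]
    exact localMarkov hbi hacyc hwz hnanc
  -- Failure of Condition 2 refutes removability.
  have hNRem : ¬ (∀ z ∈ G.children x, ∀ v ∈ G.children x ∩ G.parents z,
        G.parents v ⊆ G.parents z) → ¬ G.Removable x := by
    intro hnc2 hrem
    obtain ⟨z₀, v, w, hxz₀, hxv, hvz₀, hwv, hwz, hwx, hwz0, hvz0ne, hnanc, hnadj⟩ :=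
      hsetup hnc2
    have hz₀x : z₀ ≠ x := (MixedGraph.dir_ne' hacyc hxz₀).symm
    have hvx : v ≠ x := (MixedGraph.dir_ne' hacyc hxv).symm
    have hZsub : G.parents z₀ \ {x} ⊆ G.verts \ {x, w, z₀} := by
      rintro u ⟨hu, hux⟩
      refine ⟨(G.dir_mem hu).1, ?_⟩
      rintro (h | h | h)
      · exact hux h
      · exact hwz (h ▸ hu)
      · exact (MixedGraph.dir_ne' hacyc hu) h
    have hiff := hrem w z₀ (G.dir_mem hwv).1 (G.dir_mem hxz₀).2 hwx hz₀x hwz0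
      (G.parents z₀ \ {x}) hZsub
    have hG'bi : ∀ a b, ¬ (G.induce (G.verts \ {x})).bi a b := fun a b h => hbi a b h.1
    have hG'acyc : ∀ a b, (G.induce (G.verts \ {x})).dir a b →
        ¬ (G.induce (G.verts \ {x})).anc b a :=
      fun a b h hanc => hacyc a b h.1 (induce_anc_mono hanc)
    have hpar : (G.induce (G.verts \ {x})).parents z₀ = G.parents z₀ \ {x} := by
      ext u
      constructor
      · rintro ⟨hd, hu, hz'⟩
        exact ⟨hd, hu.2⟩
      · rintro ⟨hd, hux⟩
        exact ⟨hd, ⟨(G.dir_mem hd).1, hux⟩, ⟨(G.dir_mem hd).2, hz₀x⟩⟩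
    have hsepG' : mSep (G.induce (G.verts \ {x})) w z₀ (G.parents z₀ \ {x}) := by
      rw [← hpar]
      exact localMarkov hG'bi hG'acyc (fun hd => hwz hd.1)
        (fun h => hnanc (induce_anc_mono h))
    have hsepG := hiff.2 hsepG'
    -- but w → v ← x → z₀ is unblocked in G
    let p3 := mkPath3 (G := G) EdgeDir.fwd EdgeDir.bwd EdgeDir.fwd hwv hxv hxz₀
      (MixedGraph.dir_ne' hacyc hwv) hwx hwz0 hvx hvz0ne (MixedGraph.dir_ne' hacyc hxz₀)
      (G.dir_mem hwv).1 (G.dir_mem hwv).2 hx (G.dir_mem hxz₀).2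
    obtain ⟨i, h1, h2, hcase⟩ := hsepG p3
    have hl3 : p3.len = 3 := rfl
    have h2' : i < 3 := by omega
    interval_cases i
    · rcases hcase with ⟨hc, hno⟩ | ⟨hc, hnz⟩
      · exact hno v (Or.inl ⟨hvz₀, hvx⟩) Relation.ReflTransGen.refl
      · exact hc ⟨headAt2_fwd, headAt1_bwd⟩
    · rcases hcase with ⟨hc, hno⟩ | ⟨hc, hnz⟩
      · exact not_headAt2_bwd hc.1
      · exact hnz.2 rfl
  constructor
  · constructor
    · exact hC2toRHS
    · intro hRHS
      by_contra hnc2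
      exact hNRHS hnc2 hRHS
  · constructor
    · intro hrem
      apply hC2toRHS
      by_contra hnc2
      exact hNRem hnc2 hrem
    · intro hRHS
      apply removable_of_conds hbi hacyc hcond1
      by_contra hnc2
      exact hNRHS hnc2 hRHS
end

section
/- Let G be a MAG over V, X ∈ V, Y ∈ Mb(X;G), and Z ∈ Ne(X;G)∖{Y}. Suppose at least one of the following holds: (Condition 1) there exists W ⊆ Mb(X;G)∖{Y,Z} that m-separates Y and Z in G; or (Condition 2) for every W ⊆ Mb(X;G)∖{Y,Z}, the set W ∪ {X} does not m-separate Y and Z in G. Then for every collider path (X, V1, ..., Vm, Y) in G with {X, V1, ..., Vm} ⊆ Pa(Z;G) and Z ∉ {X, Y, V1, ..., Vm}, the vertices Y and Z are neighbors in G. -/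
/-! Auxiliary material for Statement 13. -/

section Stmt13Aux

variable {V : Type*} {G : MixedGraph V}

/-- Flip of an edge orientation (for reversing paths). -/
def EdgeDir.flip : EdgeDir → EdgeDir
  | .fwd => .bwd
  | .bwd => .fwd
  | .bidir => .bidir

lemma headAt1_flip (e : EdgeDir) : headAt1 e.flip ↔ headAt2 e := by
  cases e <;> simp [EdgeDir.flip, headAt1, headAt2]

lemma headAt2_flip (e : EdgeDir) : headAt2 e.flip ↔ headAt1 e := by
  cases e <;> simp [EdgeDir.flip, headAt1, headAt2]

lemma eq_fwd_of_not_headAt1 {e : EdgeDir} (h : ¬ headAt1 e) : e = .fwd := by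
  cases e
  · rfl
  · exact absurd (Or.inl rfl) h
  · exact absurd (Or.inr rfl) h

lemma eq_bwd_of_not_headAt2 {e : EdgeDir} (h : ¬ headAt2 e) : e = .bwd := by
  cases e
  · exact absurd (Or.inl rfl) h
  · rfl
  · exact absurd (Or.inr rfl) h

lemma edirValid_flip {a b : V} {e : EdgeDir} (h : edirValid G a b e) :
    edirValid G b a e.flip := by
  cases e
  · exact h
  · exact h
  · exact G.bi_symm h

lemma anc_of_dir {a b : V} (h : G.dir a b) : G.anc a b :=
  Relation.ReflTransGen.single h

lemma anc_trans {a b c : V} (h1 : G.anc a b) (h2 : G.anc b c) : G.anc a c :=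
  Relation.ReflTransGen.trans h1 h2

lemma anc_antisymm (hG : G.IsMAG) {a b : V} (h1 : G.anc a b) (h2 : G.anc b a) :
    a = b := by
  rcases Relation.ReflTransGen.cases_head h1 with h | ⟨w, hw, hwb⟩
  · exact h
  · exact absurd (anc_trans hwb h2) (hG.no_dir_cycle a w hw)

/-- Reversal of a path. -/
def MPath.revP {x y : V} (p : MPath G x y) : MPath G y x where
  len := p.len
  len_pos := p.len_pos
  vert i := p.vert (p.len - i)
  edir i := (p.edir (p.len - 1 - i)).flip
  first := by simpa using p.last
  last := by simpa using p.first
  mem i _ := p.mem _ (Nat.sub_le _ _)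
  inj i j hi hj h := by
    have := p.inj _ _ (Nat.sub_le _ _) (Nat.sub_le _ _) h
    omega
  valid i hi := by
    have hv := p.valid (p.len - 1 - i) (by omega)
    have h1 : p.len - 1 - i + 1 = p.len - i := by omega
    rw [h1] at hv
    have h2 : p.len - (i + 1) = p.len - 1 - i := by omega
    show edirValid G (p.vert (p.len - i)) (p.vert (p.len - (i + 1))) _
    rw [h2]
    exact edirValid_flip hv

/-- Subpath of a path, from position `a` to position `b`. -/
def MPath.seg {x y : V} (p : MPath G x y) (a b : ℕ) (hab : a < b) (hb : b ≤ p.len) :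
    MPath G (p.vert a) (p.vert b) where
  len := b - a
  len_pos := by omega
  vert i := p.vert (a + i)
  edir i := p.edir (a + i)
  first := by simp
  last := by
    show p.vert (a + (b - a)) = p.vert b
    rw [Nat.add_sub_cancel' (le_of_lt hab)]
  mem i hi := p.mem _ (by omega)
  inj i j hi hj h := by
    have := p.inj _ _ (by omega) (by omega) h
    omega
  valid i hi := p.valid (a + i) (by omega)

/-- Extend a path by one edge at the end. -/
def MPath.snocP {x y : V} (p : MPath G x y) (w : V) (e : EdgeDir)
    (hw : ∀ i, i ≤ p.len → p.vert i ≠ w) (hv : edirValid G y w e)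
    (hmem : w ∈ G.verts) : MPath G x w where
  len := p.len + 1
  len_pos := by omega
  vert i := if i ≤ p.len then p.vert i else w
  edir i := if i < p.len then p.edir i else e
  first := by simp [p.first]
  last := by simp
  mem i hi := by
    by_cases h : i ≤ p.len
    · simpa [h] using p.mem i h
    · simpa [h] using hmem
  inj i j hi hj h := by
    by_cases h1 : i ≤ p.len <;> by_cases h2 : j ≤ p.len
    · simp only [if_pos h1, if_pos h2] at h
      exact p.inj _ _ h1 h2 h
    · simp only [if_pos h1, if_neg h2] at h
      exact absurd h (hw i h1)
    · simp only [if_neg h1, if_pos h2] at h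
      exact absurd h.symm (hw j h2)
    · omega
  valid i hi := by
    by_cases h : i < p.len
    · simpa only [if_pos h, if_pos (le_of_lt h), if_pos (Nat.succ_le_of_lt h)]
        using p.valid i h
    · have hi' : i = p.len := by omega
      subst hi'
      simp only [if_pos le_rfl, if_neg (by omega : ¬ p.len + 1 ≤ p.len),
        if_neg (lt_irrefl p.len), p.last]
      exact hv

end Stmt13Aux

section Stmt13Aux2

variable {V : Type*} {G : MixedGraph V}

lemma MPath.collider_def {x y : V} (p : MPath G x y) (i : ℕ) :
    p.collider i ↔ headAt2 (p.edir (i - 1)) ∧ headAt1 (p.edir i) := Iff.rfl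

@[simp] lemma MPath.revP_vert {x y : V} (p : MPath G x y) (i : ℕ) :
    p.revP.vert i = p.vert (p.len - i) := rfl

@[simp] lemma MPath.revP_edir {x y : V} (p : MPath G x y) (i : ℕ) :
    p.revP.edir i = (p.edir (p.len - 1 - i)).flip := rfl

@[simp] lemma MPath.revP_len {x y : V} (p : MPath G x y) : p.revP.len = p.len := rfl

@[simp] lemma MPath.seg_vert {x y : V} (p : MPath G x y) (a b : ℕ) (hab : a < b)
    (hb : b ≤ p.len) (i : ℕ) : (p.seg a b hab hb).vert i = p.vert (a + i) := rfl

@[simp] lemma MPath.seg_edir {x y : V} (p : MPath G x y) (a b : ℕ) (hab : a < b)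
    (hb : b ≤ p.len) (i : ℕ) : (p.seg a b hab hb).edir i = p.edir (a + i) := rfl

@[simp] lemma MPath.seg_len {x y : V} (p : MPath G x y) (a b : ℕ) (hab : a < b)
    (hb : b ≤ p.len) : (p.seg a b hab hb).len = b - a := rfl

@[simp] lemma MPath.snocP_vert {x y : V} (p : MPath G x y) (w : V) (e : EdgeDir)
    (hw : ∀ i, i ≤ p.len → p.vert i ≠ w) (hv : edirValid G y w e) (hmem : w ∈ G.verts)
    (i : ℕ) : (p.snocP w e hw hv hmem).vert i = if i ≤ p.len then p.vert i else w := rfl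

@[simp] lemma MPath.snocP_edir {x y : V} (p : MPath G x y) (w : V) (e : EdgeDir)
    (hw : ∀ i, i ≤ p.len → p.vert i ≠ w) (hv : edirValid G y w e) (hmem : w ∈ G.verts)
    (i : ℕ) : (p.snocP w e hw hv hmem).edir i = if i < p.len then p.edir i else e := rfl

@[simp] lemma MPath.snocP_len {x y : V} (p : MPath G x y) (w : V) (e : EdgeDir)
    (hw : ∀ i, i ≤ p.len → p.vert i ≠ w) (hv : edirValid G y w e) (hmem : w ∈ G.verts) :
    (p.snocP w e hw hv hmem).len = p.len + 1 := rfl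

lemma MPath.revP_collider {x y : V} (p : MPath G x y) {i : ℕ} (hi0 : 0 < i)
    (hil : i < p.len) : p.revP.collider i ↔ p.collider (p.len - i) := by
  rw [MPath.collider_def, MPath.collider_def]
  simp only [MPath.revP_edir]
  rw [headAt2_flip, headAt1_flip]
  have e1 : p.len - 1 - (i - 1) = p.len - i := by omega
  have e2 : p.len - 1 - i = p.len - i - 1 := by omega
  rw [e1, e2]
  exact and_comm

lemma MPath.seg_collider {x y : V} (p : MPath G x y) (a b : ℕ) (hab : a < b)
    (hb : b ≤ p.len) {i : ℕ} (hi0 : 0 < i) :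
    (p.seg a b hab hb).collider i ↔ p.collider (a + i) := by
  rw [MPath.collider_def, MPath.collider_def]
  simp only [MPath.seg_edir]
  have e1 : a + (i - 1) = a + i - 1 := by omega
  rw [e1]

lemma MPath.snocP_collider_lt {x y : V} (p : MPath G x y) (w : V) (e : EdgeDir)
    (hw : ∀ i, i ≤ p.len → p.vert i ≠ w) (hv : edirValid G y w e) (hmem : w ∈ G.verts)
    {i : ℕ} (hi0 : 0 < i) (hil : i < p.len) :
    (p.snocP w e hw hv hmem).collider i ↔ p.collider i := by
  rw [MPath.collider_def, MPath.collider_def]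
  simp only [MPath.snocP_edir]
  rw [if_pos (by omega : i - 1 < p.len), if_pos hil]

lemma MPath.snocP_collider_last {x y : V} (p : MPath G x y) (w : V) (e : EdgeDir)
    (hw : ∀ i, i ≤ p.len → p.vert i ≠ w) (hv : edirValid G y w e) (hmem : w ∈ G.verts) :
    (p.snocP w e hw hv hmem).collider p.len ↔
      headAt2 (p.edir (p.len - 1)) ∧ headAt1 e := by
  rw [MPath.collider_def]
  simp only [MPath.snocP_edir]
  rw [if_pos (by have := p.len_pos; omega : p.len - 1 < p.len), if_neg (lt_irrefl p.len)]

lemma MPath.vert_ne_first {a b : V} (P : MPath G a b) {i : ℕ} (hi0 : 0 < i)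
    (hil : i ≤ P.len) : P.vert i ≠ a := by
  intro h
  have := P.inj i 0 hil (Nat.zero_le _) (by rw [h, P.first])
  omega

lemma MPath.vert_ne_last {a b : V} (P : MPath G a b) {i : ℕ} (hil : i < P.len) :
    P.vert i ≠ b := by
  intro h
  have := P.inj i P.len (by omega) le_rfl (by rw [h, P.last])
  omega

end Stmt13Aux2

/-- In a MAG `G`, with `Y ∈ Mb(X)`, `Z ∈ Ne(X) ∖ {Y}`, if either
some `W ⊆ Mb(X) ∖ {Y, Z}` m-separates `Y, Z`, or no `W ∪ {X}` with
`W ⊆ Mb(X) ∖ {Y, Z}` m-separates `Y, Z`, then for every collider path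
`(X, V₁, …, Vₘ, Y)` with `{X, V₁, …, Vₘ} ⊆ Pa(Z)` and `Z` not on the path,
the vertices `Y` and `Z` are neighbors in `G`. -/
theorem stmt_13 {V : Type*} [Fintype V] (G : MixedGraph V) (hG : G.IsMAG)
    (x : V) (hx : x ∈ G.verts) (y : V) (hy : y ∈ G.mb x)
    (z : V) (hz : z ∈ G.neighbors x) (hzy : z ≠ y)
    (hcond : (∃ W ⊆ G.mb x \ {y, z}, mSep G y z W) ∨
             (∀ W ⊆ G.mb x \ {y, z}, ¬ mSep G y z (W ∪ {x}))) :
    ∀ p : MPath G x y, p.isColliderPath →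
      (∀ i, i < p.len → G.dir (p.vert i) z) →
      (∀ i, i ≤ p.len → p.vert i ≠ z) → G.adj y z := by
  classical
  intro p hcp hpar hnz
  have hplen := p.len_pos
  have hyx : y ≠ x := hy.1
  have hzx : z ≠ x := hz.1
  have hxz : G.dir x z := by
    have h := hpar 0 p.len_pos
    rwa [p.first] at h
  have hzv : z ∈ G.verts := (G.dir_mem hxz).2
  have hyv : y ∈ G.verts := by
    have h := p.mem p.len le_rfl
    rwa [p.last] at h
  have hancxz : G.anc x z := anc_of_dir hxz
  -- Step 1: the reversed path extended by x → z is m-connecting given any W with x ∉ W.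
  have hq : ∀ W : Set V, x ∉ W → ¬ mSep G y z W := by
    intro W hxW hsep
    have hrevw : ∀ i, i ≤ (p.revP).len → (p.revP).vert i ≠ z := fun i _ =>
      hnz _ (Nat.sub_le _ _)
    have hval : edirValid G x z EdgeDir.fwd := hxz
    obtain ⟨i, hi0, hilen, hcase⟩ := hsep ((p.revP).snocP z EdgeDir.fwd hrevw hval hzv)
    simp only [MPath.snocP_len, MPath.revP_len] at hilen
    have hile : i ≤ p.len := by omega
    have hqv : ((p.revP).snocP z EdgeDir.fwd hrevw hval hzv).vert i = p.vert (p.len - i) := by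
      simp only [MPath.snocP_vert, MPath.revP_len, MPath.revP_vert, if_pos hile]
      exact if_pos hile
    rcases hcase with ⟨_, hno⟩ | ⟨hnc, hmem⟩
    · refine hno z (Set.mem_union_right _ (Set.mem_insert_of_mem _ rfl)) ?_
      rw [hqv]
      exact anc_of_dir (hpar _ (by omega))
    · by_cases hieq : i = p.len
      · apply hxW
        have hix : ((p.revP).snocP z EdgeDir.fwd hrevw hval hzv).vert i = x := by
          rw [hqv, hieq, Nat.sub_self, p.first]
        rwa [hix] at hmem
      · have hilt : i < p.len := by omega
        apply hnc
        rw [MPath.snocP_collider_lt _ _ _ _ _ _ hi0 (by simpa using hilt),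
            MPath.revP_collider _ hi0 hilt]
        exact hcp (p.len - i) (by omega) (by omega)
  rcases hcond with ⟨W, hWsub, hsep⟩ | hcond2
  · refine absurd hsep (hq W fun hxW => ?_)
    have hmx : x ∈ G.mb x := (hWsub hxW).1
    exact hmx.1 rfl
  -- Step 2: condition 2.  Suppose y, z are not adjacent.
  by_contra hadj
  have hyz : y ≠ z := Ne.symm hzy
  obtain ⟨S₀, hS₀sub, hS₀⟩ := hG.maximal y hyv z hzv hyz hadj
  set Wm : Set V := {v | v ∈ G.mb x ∧ (G.anc v y ∨ G.anc v z) ∧ v ≠ y ∧ v ≠ z}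
    with hWmdef
  have hWmsub : Wm ⊆ G.mb x \ {y, z} := by
    intro v hv
    rw [hWmdef] at hv
    refine ⟨hv.1, ?_⟩
    intro hmem
    rcases hmem with h | h
    · exact hv.2.2.1 h
    · exact hv.2.2.2 h
  refine hcond2 Wm hWmsub ?_
  intro P
  by_contra hPb
  have hanc_mem : ∀ w ∈ (Wm ∪ {x}) ∪ ({y, z} : Set V), G.anc w y ∨ G.anc w z := by
    intro w hw
    simp only [hWmdef, Set.mem_union, Set.mem_insert_iff, Set.mem_singleton_iff,
      Set.mem_setOf_eq] at hw
    rcases hw with (hw | rfl) | (rfl | rfl)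
    · exact hw.2.1
    · exact Or.inr hancxz
    · exact Or.inl Relation.ReflTransGen.refl
    · exact Or.inr Relation.ReflTransGen.refl
  have hact_nc : ∀ i, 0 < i → i < P.len → ¬ P.collider i → P.vert i ∉ Wm ∪ {x} :=
    fun i hi0 hil hnc hmem => hPb ⟨i, hi0, hil, Or.inr ⟨hnc, hmem⟩⟩
  have hcol_anc : ∀ i, 0 < i → i < P.len → P.collider i →
      G.anc (P.vert i) y ∨ G.anc (P.vert i) z := by
    intro i hi0 hil hc
    by_contra hno
    push_neg at hno
    refine hPb ⟨i, hi0, hil, Or.inl ⟨hc, ?_⟩⟩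
    intro w hw hanc
    rcases hanc_mem w hw with h | h
    · exact hno.1 (anc_trans hanc h)
    · exact hno.2 (anc_trans hanc h)
  have hlen2 : 2 ≤ P.len := by
    by_contra hl
    have h1 : P.len = 1 := by have := P.len_pos; omega
    have hv := P.valid 0 P.len_pos
    rw [P.first] at hv
    have hv1 : P.vert (0 + 1) = z := by
      have h01 : (0 : ℕ) + 1 = P.len := by omega
      rw [h01, P.last]
    rw [hv1] at hv
    cases hE : P.edir 0 <;> rw [hE] at hv
    · exact hadj (Or.inl hv)
    · exact hadj (Or.inr (Or.inl hv))
    · exact hadj (Or.inr (Or.inr hv))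
  -- every interior vertex of an unblocked path is an ancestor of y or z
  have chaseR : ∀ d i, 0 < i → i < P.len → P.len - i ≤ d → P.edir i = EdgeDir.fwd →
      G.anc (P.vert i) y ∨ G.anc (P.vert i) z := by
    intro d
    induction d with
    | zero => intro i hi0 hil hd _; omega
    | succ d ih =>
      intro i hi0 hil hd hfwd
      have hdir : G.dir (P.vert i) (P.vert (i + 1)) := by
        have hv := P.valid i hil
        rwa [hfwd] at hv
      by_cases hend : i + 1 = P.len
      · right
        have hres := anc_of_dir hdir
        rw [hend, P.last] at hres
        exact hres
      · have hil1 : i + 1 < P.len := by omega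
        by_cases hc : P.collider (i + 1)
        · rcases hcol_anc (i + 1) (by omega) hil1 hc with h | h
          · exact Or.inl (anc_trans (anc_of_dir hdir) h)
          · exact Or.inr (anc_trans (anc_of_dir hdir) h)
        · have h2 : headAt2 (P.edir (i + 1 - 1)) := by
            rw [Nat.add_sub_cancel, hfwd]
            exact Or.inl rfl
          have hf1 : P.edir (i + 1) = EdgeDir.fwd :=
            eq_fwd_of_not_headAt1 fun h => hc ((P.collider_def (i + 1)).mpr ⟨h2, h⟩)
          rcases ih (i + 1) (by omega) hil1 (by omega) hf1 with h | h
          · exact Or.inl (anc_trans (anc_of_dir hdir) h)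
          · exact Or.inr (anc_trans (anc_of_dir hdir) h)
  have chaseL : ∀ d i, 0 < i → i < P.len → i ≤ d → P.edir (i - 1) = EdgeDir.bwd →
      G.anc (P.vert i) y ∨ G.anc (P.vert i) z := by
    intro d
    induction d with
    | zero => intro i hi0 _ hd _; omega
    | succ d ih =>
      intro i hi0 hil hd hbwd
      have hdir : G.dir (P.vert i) (P.vert (i - 1)) := by
        have hv := P.valid (i - 1) (by omega)
        rw [hbwd] at hv
        have h1 : i - 1 + 1 = i := by omega
        rw [h1] at hv
        exact hv
      by_cases hbeg : i - 1 = 0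
      · left
        have hres := anc_of_dir hdir
        rw [hbeg, P.first] at hres
        exact hres
      · by_cases hc : P.collider (i - 1)
        · rcases hcol_anc (i - 1) (by omega) (by omega) hc with h | h
          · exact Or.inl (anc_trans (anc_of_dir hdir) h)
          · exact Or.inr (anc_trans (anc_of_dir hdir) h)
        · have h1 : headAt1 (P.edir (i - 1)) := by
            rw [hbwd]; exact Or.inl rfl
          have hb1 : P.edir (i - 1 - 1) = EdgeDir.bwd :=
            eq_bwd_of_not_headAt2 fun h => hc ((P.collider_def (i - 1)).mpr ⟨h, h1⟩)
          rcases ih (i - 1) (by omega) (by omega) (by omega) hb1 with h | h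
          · exact Or.inl (anc_trans (anc_of_dir hdir) h)
          · exact Or.inr (anc_trans (anc_of_dir hdir) h)
  have hint_anc : ∀ i, 0 < i → i < P.len →
      G.anc (P.vert i) y ∨ G.anc (P.vert i) z := by
    intro i hi0 hil
    by_cases hc : P.collider i
    · exact hcol_anc i hi0 hil hc
    · by_cases h1 : headAt1 (P.edir i)
      · have h2 : ¬ headAt2 (P.edir (i - 1)) :=
          fun h => hc ((P.collider_def i).mpr ⟨h, h1⟩)
        exact chaseL P.len i hi0 hil (by omega) (eq_bwd_of_not_headAt2 h2)
      · exact chaseR P.len i hi0 hil (by omega) (eq_fwd_of_not_headAt1 h1)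
  -- if all interior vertices are colliders, P is unblockable: contradiction with S₀
  by_cases hallc : ∀ i, 0 < i → i < P.len → P.collider i
  · obtain ⟨i, hi0, hil, hcase⟩ := hS₀ P
    rcases hcase with ⟨_, hno⟩ | ⟨hnc, _⟩
    · rcases hint_anc i hi0 hil with h | h
      · exact hno y (Set.mem_union_right _ (Set.mem_insert _ _)) h
      · exact hno z (Set.mem_union_right _ (Set.mem_insert_of_mem _ rfl)) h
    · exact hnc (hallc i hi0 hil)
  push_neg at hallc
  obtain ⟨i0, hi00, hi0l, hnc0⟩ := hallc
  by_cases hzy_anc : G.anc z y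
  · -- Case A : z is an ancestor of y.  Then p is the single edge x → y.
    have hdxy : G.dir x y := by
      rcases Nat.lt_or_ge p.len 2 with h2 | h2
      · have h1 : p.len = 1 := by omega
        have hv := p.valid 0 p.len_pos
        rw [p.first] at hv
        have hv1 : p.vert (0 + 1) = y := by
          have h01 : (0 : ℕ) + 1 = p.len := by omega
          rw [h01, p.last]
        rw [hv1] at hv
        cases hE : p.edir 0 <;> rw [hE] at hv
        · exact hv
        · exact absurd (anc_trans hancxz hzy_anc) (hG.no_dir_cycle y x hv)
        · exact absurd (anc_trans hancxz hzy_anc)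
            (hG.no_almost_dir_cycle y x (G.bi_symm hv))
      · exfalso
        have hm := hcp (p.len - 1) (by omega) (by omega)
        rw [MPath.collider_def] at hm
        have hVm : G.anc (p.vert (p.len - 1)) y :=
          anc_trans (anc_of_dir (hpar (p.len - 1) (by omega))) hzy_anc
        have hv := p.valid (p.len - 1) (by omega)
        have h1 : p.len - 1 + 1 = p.len := by omega
        rw [h1, p.last] at hv
        rcases hm.2 with hE | hE <;> rw [hE] at hv
        · exact hG.no_dir_cycle y _ hv hVm
        · exact hG.no_almost_dir_cycle y _ (G.bi_symm hv) hVm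
    -- leftmost interior non-collider
    have hQ : ∃ i, 0 < i ∧ i < P.len ∧ ¬ P.collider i := ⟨i0, hi00, hi0l, hnc0⟩
    obtain ⟨hi0, hil, hnci⟩ := Nat.find_spec hQ
    set i := Nat.find hQ with hidef
    have hcoll : ∀ t, 0 < t → t < i → P.collider t := by
      intro t ht0 hti
      by_contra hnc
      exact Nat.find_min hQ hti ⟨ht0, by omega, hnc⟩
    have hnotin := hact_nc i hi0 hil hnci
    have hix : P.vert i ≠ x := fun h =>
      hnotin (Set.mem_union_right _ (Set.mem_singleton_iff.mpr h))
    have hhy : headAt1 (P.edir 0) := by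
      by_contra hh
      have hfwd := eq_fwd_of_not_headAt1 hh
      have hdir : G.dir (P.vert 0) (P.vert (0 + 1)) := by
        have hv := P.valid 0 P.len_pos
        rwa [hfwd] at hv
      rw [P.first] at hdir
      rcases hint_anc (0 + 1) Nat.one_pos (by omega) with h | h
      · exact hG.no_dir_cycle y _ hdir h
      · exact hyz (anc_antisymm hG (anc_trans (anc_of_dir hdir) h) hzy_anc)
    have hmb : P.vert i ∈ G.mb x := by
      by_cases hxon : ∃ t, 0 < t ∧ t < i ∧ P.vert t = x
      · obtain ⟨t, ht0, hti, htx⟩ := hxon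
        have hcp' : ∃ q : MPath G (P.vert i) (P.vert t), q.isColliderPath := by
          refine ⟨(P.seg t i hti (le_of_lt hil)).revP, ?_⟩
          intro s hs0 hsl
          simp only [MPath.revP_len, MPath.seg_len] at hsl
          rw [MPath.revP_collider _ hs0 (by simpa using hsl)]
          simp only [MPath.seg_len]
          rw [MPath.seg_collider _ _ _ _ _ (by omega : 0 < i - t - s)]
          have e1 : t + (i - t - s) = i - s := by omega
          rw [e1]
          exact hcoll (i - s) (by omega) (by omega)
        rw [htx] at hcp'
        exact ⟨hix, hcp'⟩
      · push_neg at hxon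
        have hR0w : ∀ s, s ≤ (P.seg 0 i hi0 (le_of_lt hil)).revP.len →
            (P.seg 0 i hi0 (le_of_lt hil)).revP.vert s ≠ x := by
          intro s hs
          simp only [MPath.revP_len, MPath.seg_len, Nat.sub_zero] at hs
          simp only [MPath.revP_vert, MPath.seg_vert, MPath.seg_len, Nat.sub_zero,
            Nat.zero_add]
          by_cases h0 : s = 0
          · subst h0
            simpa using hix
          · by_cases hsi : s = i
            · subst hsi
              simp only [Nat.sub_self]
              rw [P.first]
              exact hyx
            · exact hxon (i - s) (by omega) (by omega)
        have hval : edirValid G (P.vert 0) x EdgeDir.bwd := by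
          show G.dir x (P.vert 0)
          rw [P.first]
          exact hdxy
        refine ⟨hix, ((P.seg 0 i hi0 (le_of_lt hil)).revP).snocP x EdgeDir.bwd
          hR0w hval hx, ?_⟩
        intro s hs0 hsl
        simp only [MPath.snocP_len, MPath.revP_len, MPath.seg_len, Nat.sub_zero] at hsl
        by_cases hcase : s < i
        · rw [MPath.snocP_collider_lt _ _ _ _ _ _ hs0
            (by simp only [MPath.revP_len, MPath.seg_len, Nat.sub_zero]; exact hcase),
            MPath.revP_collider _ hs0 (by simpa using hcase)]
          simp only [MPath.seg_len, Nat.sub_zero]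
          rw [MPath.seg_collider _ _ _ _ _ (by omega : 0 < i - s)]
          simp only [Nat.zero_add]
          exact hcoll (i - s) (by omega) (by omega)
        · have hsi : s = (P.seg 0 i hi0 (le_of_lt hil)).revP.len := by
            simp only [MPath.revP_len, MPath.seg_len, Nat.sub_zero]
            omega
          rw [hsi, MPath.snocP_collider_last]
          constructor
          · simp only [MPath.revP_edir, MPath.revP_len, MPath.seg_len, Nat.sub_zero]
            rw [headAt2_flip]
            have e1 : i - 1 - (i - 1) = 0 := by omega
            rw [e1]
            simpa using hhy
          · exact Or.inl rfl
    have hmem : P.vert i ∈ Wm := by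
      rw [hWmdef]
      exact ⟨hmb, hint_anc i hi0 hil, P.vert_ne_first hi0 (le_of_lt hil),
        P.vert_ne_last hil⟩
    exact hnotin (Set.mem_union_left _ hmem)
  · -- Case B : z is not an ancestor of y.  Use the rightmost interior non-collider.
    have hQj := Nat.findGreatest_spec (P := fun t => 0 < t ∧ t < P.len ∧ ¬ P.collider t)
      (le_of_lt hi0l) ⟨hi00, hi0l, hnc0⟩
    set j := Nat.findGreatest (fun t => 0 < t ∧ t < P.len ∧ ¬ P.collider t) P.len
      with hjdef
    obtain ⟨hj0, hjl, hncj⟩ := hQj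
    have hcoll : ∀ t, j < t → t < P.len → P.collider t := by
      intro t hjt htl
      by_contra hnc
      exact Nat.findGreatest_is_greatest hjt (le_of_lt htl) ⟨by omega, htl, hnc⟩
    have hnotin := hact_nc j hj0 hjl hncj
    have hjx : P.vert j ≠ x := fun h =>
      hnotin (Set.mem_union_right _ (Set.mem_singleton_iff.mpr h))
    have hhz : headAt2 (P.edir (P.len - 1)) := by
      by_contra hh
      have hbwd := eq_bwd_of_not_headAt2 hh
      have hdir : G.dir (P.vert P.len) (P.vert (P.len - 1)) := by
        have hv := P.valid (P.len - 1) (by omega)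
        rw [hbwd] at hv
        have h1 : P.len - 1 + 1 = P.len := by omega
        rw [h1] at hv
        exact hv
      rw [P.last] at hdir
      rcases hint_anc (P.len - 1) (by omega) (by omega) with h | h
      · exact hzy_anc (anc_trans (anc_of_dir hdir) h)
      · exact hG.no_dir_cycle z _ hdir h
    have hmb : P.vert j ∈ G.mb x := by
      by_cases hxon : ∃ t, j < t ∧ t < P.len ∧ P.vert t = x
      · obtain ⟨t, hjt, htl, htx⟩ := hxon
        have hcp' : ∃ q : MPath G (P.vert j) (P.vert t), q.isColliderPath := by
          refine ⟨P.seg j t hjt (le_of_lt htl), ?_⟩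
          intro s hs0 hsl
          rw [MPath.seg_collider _ _ _ _ _ hs0]
          simp only [MPath.seg_len] at hsl
          exact hcoll (j + s) (by omega) (by omega)
        rw [htx] at hcp'
        exact ⟨hjx, hcp'⟩
      · push_neg at hxon
        have hR0w : ∀ s, s ≤ (P.seg j P.len hjl le_rfl).len →
            (P.seg j P.len hjl le_rfl).vert s ≠ x := by
          intro s hs
          simp only [MPath.seg_len] at hs
          simp only [MPath.seg_vert]
          by_cases h0 : s = 0
          · subst h0
            simpa using hjx
          · by_cases hend : j + s = P.len
            · rw [hend, P.last]
              exact hzx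
            · exact hxon (j + s) (by omega) (by omega)
        have hval : edirValid G (P.vert P.len) x EdgeDir.bwd := by
          show G.dir x (P.vert P.len)
          rw [P.last]
          exact hxz
        refine ⟨hjx, (P.seg j P.len hjl le_rfl).snocP x EdgeDir.bwd hR0w hval hx, ?_⟩
        intro s hs0 hsl
        simp only [MPath.snocP_len, MPath.seg_len] at hsl
        by_cases hcase : s < P.len - j
        · rw [MPath.snocP_collider_lt _ _ _ _ _ _ hs0
            (by simp only [MPath.seg_len]; exact hcase),
            MPath.seg_collider _ _ _ _ _ hs0]
          exact hcoll (j + s) (by omega) (by omega)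
        · have hsi : s = (P.seg j P.len hjl le_rfl).len := by
            simp only [MPath.seg_len]
            omega
          rw [hsi, MPath.snocP_collider_last]
          constructor
          · simp only [MPath.seg_edir, MPath.seg_len]
            have e1 : j + (P.len - j - 1) = P.len - 1 := by omega
            rw [e1]
            exact hhz
          · exact Or.inl rfl
    have hmem : P.vert j ∈ Wm := by
      rw [hWmdef]
      exact ⟨hmb, hint_anc j hj0 hjl, P.vert_ne_first hj0 (le_of_lt hjl),
        P.vert_ne_last hjl⟩
    exact hnotin (Set.mem_union_left _ hmem)
end
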